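/- arXiv:2111.00393 — 5 statements merged into one kernel-verified Lean document; each statement's English description precedes it below -/
import Mathlib

section
/- Every geometric lattice admits a total coatom ordering. -/
/-- `𝒢` is an initial segment of the set of elements covered by `F`, with
respect to the (strict) total order `r`: every element covered by `F` that is
`r`-smaller than some member of `𝒢` also belongs to `𝒢`. -/
def InitialSegmentCoveredBy {L : Type*} [Lattice L] (r : L → L → Prop)
    (F : L) (𝒢 : Set L) : Prop :=
  (∀ G ∈ 𝒢, G ⋖ F) ∧ ∀ G G' : L, G' ∈ 𝒢 → G ⋖ F → r G G' → G ∈ 𝒢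

/-- `r` is a total coatom ordering of the lattice `L`: a strict total order such
that for every `F ∈ L`, (i) for all `G, G'` covered by `F` with `G ≺ G'` there
is `G''` covered by `F` with `G'' ≺ G'`, `G' ⊓ G''` covered by `G'`, and
`G ⊓ G' ≤ G''`; and (ii) for every initial segment `𝒢` covered by `F` with
`≺`-largest element `G'`, the set `{G ⊓ G' : G ∈ 𝒢, G ⊓ G'` covered by `G'}` is
an initial segment covered by `G'`. -/
def IsTotalCoatomOrdering {L : Type*} [Lattice L] (r : L → L → Prop) : Prop :=
  IsStrictTotalOrder L r ∧
  (∀ F G G' : L, G ⋖ F → G' ⋖ F → r G G' →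
    ∃ G'', G'' ⋖ F ∧ r G'' G' ∧ (G' ⊓ G'') ⋖ G' ∧ G ⊓ G' ≤ G'') ∧
  (∀ F : L, ∀ 𝒢 : Set L, InitialSegmentCoveredBy r F 𝒢 →
    ∀ G' ∈ 𝒢, (∀ G ∈ 𝒢, G ≠ G' → r G G') →
      InitialSegmentCoveredBy r G' {H | H ⋖ G' ∧ ∃ G ∈ 𝒢, H = G ⊓ G'})

/-- A lattice admits a total coatom ordering. -/
def AdmitsTotalCoatomOrdering (L : Type*) [Lattice L] : Prop :=
  ∃ r : L → L → Prop, IsTotalCoatomOrdering r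

section GeomAux

variable {L : Type*} [Lattice L] [Fintype L] [BoundedOrder L]

/-- The set of atoms below `X`, as indices in `Fin (card L)`. -/
noncomputable def geomAtomFin (X : L) : Finset (Fin (Fintype.card L)) :=
  (@Finset.filter L (fun a => IsAtom a ∧ a ≤ X) (Classical.decPred _) Finset.univ).image
    (Fintype.equivFin L)

/-- The candidate total coatom ordering: reverse colexicographic order on atom sets. -/
noncomputable def geomOrd (X Y : L) : Prop :=
  toColex (geomAtomFin Y) < toColex (geomAtomFin X)

lemma mem_geomAtomFin {X : L} {i : Fin (Fintype.card L)} :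
    i ∈ geomAtomFin X ↔ ∃ a : L, (IsAtom a ∧ a ≤ X) ∧ Fintype.equivFin L a = i := by
  simp [geomAtomFin, Finset.mem_image, Finset.mem_filter]

lemma equivFin_mem_geomAtomFin {X a : L} :
    Fintype.equivFin L a ∈ geomAtomFin X ↔ IsAtom a ∧ a ≤ X := by
  rw [mem_geomAtomFin]
  constructor
  · rintro ⟨b, hb, hba⟩
    rwa [(Fintype.equivFin L).injective hba] at hb
  · exact fun h => ⟨a, h, rfl⟩

lemma geomOrd_iff {X Y : L} :
    geomOrd X Y ↔ ∃ a : L, IsAtom a ∧ a ≤ X ∧ ¬a ≤ Y ∧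
      ∀ b : L, IsAtom b → b ≤ Y → ¬b ≤ X →
        Fintype.equivFin L b < Fintype.equivFin L a := by
  rw [geomOrd, Finset.Colex.toColex_lt_toColex_iff_exists_forall_lt]
  constructor
  · rintro ⟨i, hiX, hiY, hall⟩
    obtain ⟨a, ⟨ha, haX⟩, rfl⟩ := mem_geomAtomFin.mp hiX
    refine ⟨a, ha, haX, fun haY => hiY (equivFin_mem_geomAtomFin.mpr ⟨ha, haY⟩), ?_⟩
    intro b hb hbY hbX
    exact hall _ (equivFin_mem_geomAtomFin.mpr ⟨hb, hbY⟩)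
      (fun h => hbX (equivFin_mem_geomAtomFin.mp h).2)
  · rintro ⟨a, ha, haX, haY, hall⟩
    refine ⟨Fintype.equivFin L a, equivFin_mem_geomAtomFin.mpr ⟨ha, haX⟩,
      fun h => haY (equivFin_mem_geomAtomFin.mp h).2, ?_⟩
    intro i hiY hiX
    obtain ⟨b, ⟨hb, hbY⟩, rfl⟩ := mem_geomAtomFin.mp hiY
    exact hall b hb hbY (fun h => hiX (equivFin_mem_geomAtomFin.mpr ⟨hb, h⟩))

lemma geom_le_of_atoms
    (hatomic : ∀ x : L, ∃ s : Finset L, (∀ a ∈ s, IsAtom a) ∧ x = s.sup id)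
    {x y : L} (h : ∀ a : L, IsAtom a → a ≤ x → a ≤ y) : x ≤ y := by
  obtain ⟨s, hs, rfl⟩ := hatomic x
  exact Finset.sup_le fun a ha => h a (hs a ha) (Finset.le_sup (f := id) ha)

/-- In a finite lattice, below any strict upper bound there is a cover. -/
lemma geom_exists_le_covBy {x y : L} (h : x < y) : ∃ c : L, x ≤ c ∧ c ⋖ y := by
  classical
  have hne : (Finset.univ.filter (fun z : L => x ≤ z ∧ z < y)).Nonempty :=
    ⟨x, by simp [h]⟩
  obtain ⟨c, hc, hcmax'⟩ := Finset.exists_maximal hne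
  have hcmax : ∀ z ∈ _, ¬c < z := fun z hz hcz => hcz.not_ge (hcmax' hz hcz.le)
  simp only [Finset.mem_filter, Finset.mem_univ, true_and] at hc
  refine ⟨c, hc.1, hc.2, fun z hcz hzy => ?_⟩
  exact hcmax z (by simp [Finset.mem_filter, hc.1.trans hcz.le, hzy]) hcz

/-- Covering property: joining with an atom not below gives a cover. -/
lemma geom_covering
    (hatomic : ∀ x : L, ∃ s : Finset L, (∀ a ∈ s, IsAtom a) ∧ x = s.sup id)
    (hsemimod : ∀ a b : L, a ⊓ b ⋖ a → a ⊓ b ⋖ b → a ⋖ a ⊔ b ∧ b ⋖ a ⊔ b)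
    (a : L) : ∀ p : L, IsAtom p → ¬p ≤ a → a ⋖ a ⊔ p := by
  induction a using WellFoundedLT.induction with
  | _ a IH =>
    intro p hp hpa
    rcases eq_or_ne a ⊥ with rfl | ha
    · rw [bot_sup_eq]; exact hp.bot_covBy
    · obtain ⟨b, -, hba⟩ := geom_exists_le_covBy (bot_lt_iff_ne_bot.mpr ha)
      have hpb : ¬p ≤ b := fun h => hpa (h.trans hba.le)
      have hbp : b ⋖ b ⊔ p := IH b hba.lt p hp hpb
      -- a ⊓ (b ⊔ p) = b
      have hax : a ⊓ (b ⊔ p) = b := by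
        have h1 : b ≤ a ⊓ (b ⊔ p) := le_inf hba.le le_sup_left
        rcases h1.lt_or_eq with hlt | heq
        · exfalso
          have h2 : a ⊓ (b ⊔ p) = a :=
            inf_le_left.lt_or_eq.resolve_left (hba.2 hlt)
          have h3 : a ≤ b ⊔ p := inf_eq_left.mp h2
          have h4 : a = b ⊔ p :=
            h3.lt_or_eq.resolve_left (hbp.2 hba.lt)
          exact hpa (h4 ▸ le_sup_right)
        · exact heq.symm
      have hB := hsemimod a (b ⊔ p) (by rw [hax]; exact hba) (by rw [hax]; exact hbp)
      have h2 : a ⊔ (b ⊔ p) = a ⊔ p := by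
        rw [← sup_assoc, sup_eq_left.mpr hba.le]
      exact h2 ▸ hB.1

/-- Key structural lemma: if `H ⋖ G' ⋖ F` and `p` is an atom below `F` but not
below `G'`, then `H ⊔ p` is a coatom of `F` meeting `G'` exactly in `H`. -/
lemma geom_step
    (hatomic : ∀ x : L, ∃ s : Finset L, (∀ a ∈ s, IsAtom a) ∧ x = s.sup id)
    (hsemimod : ∀ a b : L, a ⊓ b ⋖ a → a ⊓ b ⋖ b → a ⋖ a ⊔ b ∧ b ⋖ a ⊔ b)
    {H G' F p : L} (h1 : H ⋖ G') (h2 : G' ⋖ F) (hp : IsAtom p)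
    (hpF : p ≤ F) (hpG' : ¬p ≤ G') :
    (H ⊔ p) ⋖ F ∧ (H ⊔ p) ⊓ G' = H := by
  have hpH : ¬p ≤ H := fun h => hpG' (h.trans h1.le)
  have hHp : H ⋖ H ⊔ p := geom_covering hatomic hsemimod H p hp hpH
  have hG'p : G' ⊔ p = F := by
    have hc : G' ⋖ G' ⊔ p := geom_covering hatomic hsemimod G' p hp hpG'
    exact (sup_le h2.le hpF).lt_or_eq.resolve_left (fun hlt => h2.2 hc.lt hlt)
  have hmeet : (H ⊔ p) ⊓ G' = H := by
    have hle1 : H ≤ (H ⊔ p) ⊓ G' := le_inf le_sup_left h1.le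
    rcases hle1.lt_or_eq with hlt | heq
    · exfalso
      have h4 : (H ⊔ p) ⊓ G' = G' :=
        inf_le_right.lt_or_eq.resolve_left (h1.2 hlt)
      have h5 : G' ≤ H ⊔ p := by rw [← h4]; exact inf_le_left
      have h6 : H ⊔ p = F := by
        refine le_antisymm (sup_le (h1.le.trans h2.le) hpF) ?_
        rw [← hG'p]; exact sup_le h5 le_sup_right
      have h7 : H ⋖ F := h6 ▸ hHp
      exact h7.2 h1.lt h2.lt
    · exact heq.symm
  have hB := hsemimod (H ⊔ p) G' (by rw [hmeet]; exact hHp) (by rw [hmeet]; exact h1)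
  have hsup : (H ⊔ p) ⊔ G' = F := by
    rw [sup_assoc, sup_comm p G', hG'p, sup_eq_right.mpr (h1.le.trans h2.le)]
  exact ⟨hsup ▸ hB.1, hmeet⟩

end GeomAux

/-- Every geometric lattice (a finite lattice that is atomic
and semimodular) admits a total coatom ordering. -/
theorem geometric_lattice_admits_totalCoatomOrdering
    (L : Type*) [Lattice L] [Fintype L] [BoundedOrder L]
    (hatomic : ∀ x : L, ∃ s : Finset L, (∀ a ∈ s, IsAtom a) ∧ x = s.sup id)
    (hsemimod : ∀ a b : L, a ⊓ b ⋖ a → a ⊓ b ⋖ b → a ⋖ a ⊔ b ∧ b ⋖ a ⊔ b) :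
    AdmitsTotalCoatomOrdering L := by
  refine ⟨geomOrd, ?_, ?_, ?_⟩
  · -- strict total order
    have hinj : ∀ X Y : L, geomAtomFin X = geomAtomFin Y → X = Y := by
      intro X Y h
      have key : ∀ Z W : L, geomAtomFin Z = geomAtomFin W → Z ≤ W := by
        intro Z W hZW
        refine geom_le_of_atoms hatomic (fun a ha haZ => ?_)
        have : Fintype.equivFin L a ∈ geomAtomFin W := by
          rw [← hZW]; exact equivFin_mem_geomAtomFin.mpr ⟨ha, haZ⟩
        exact (equivFin_mem_geomAtomFin.mp this).2
      exact le_antisymm (key X Y h) (key Y X h.symm)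
    refine { trichotomous := ?_, irrefl := fun a => lt_irrefl _, trans := fun a b c hab hbc => by unfold geomOrd at *; exact lt_trans hbc hab }
    · intro X Y
      rcases lt_trichotomy (toColex (geomAtomFin X)) (toColex (geomAtomFin Y)) with h | h | h
      · exact fun _ h2 => absurd h h2
      · exact fun _ _ => hinj X Y (toColex_inj.mp h)
      · exact fun h1 _ => absurd h h1
  · -- condition (i)
    intro F G G' hG hG' hr
    obtain ⟨δ, hδa, hδG, hδG', hδall⟩ := geomOrd_iff.mp hr
    have hlt : G ⊓ G' < G' := by
      refine inf_le_right.lt_of_ne (fun h => ?_)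
      have hle : G' ≤ G := by rw [← h]; exact inf_le_left
      rcases hle.lt_or_eq with h1 | h1
      · exact hG'.2 h1 hG.lt
      · exact hδG' (h1 ▸ hδG)
    obtain ⟨H, hH1, hH2⟩ := geom_exists_le_covBy hlt
    have hδF : δ ≤ F := hδG.trans hG.le
    obtain ⟨hcov, hmeet⟩ := geom_step hatomic hsemimod hH2 hG' hδa hδF hδG'
    refine ⟨H ⊔ δ, hcov, ?_, ?_, hH1.trans le_sup_left⟩
    · refine geomOrd_iff.mpr ⟨δ, hδa, le_sup_right, hδG', ?_⟩
      intro b hb hbG' hbHδ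
      have hbG : ¬b ≤ G := fun h =>
        hbHδ ((le_inf h hbG').trans (hH1.trans le_sup_left))
      exact hδall b hb hbG' hbG
    · rw [inf_comm, hmeet]; exact hH2
  · -- condition (ii)
    intro F 𝒢 hseg G' hG'𝒢 hmax
    refine ⟨fun H hH => hH.1, ?_⟩
    rintro H H' ⟨hH'cov, G₀, hG₀𝒢, rfl⟩ hHcov hr
    have hG'F : G' ⋖ F := hseg.1 _ hG'𝒢
    have hG₀F : G₀ ⋖ F := hseg.1 _ hG₀𝒢
    have hG₀ne : G₀ ≠ G' := by
      rintro rfl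
      exact hH'cov.ne (by rw [inf_idem])
    obtain ⟨γ, hγa, hγG₀, hγG', hγall⟩ := geomOrd_iff.mp (hmax G₀ hG₀𝒢 hG₀ne)
    obtain ⟨α, hαa, hαH, hαH', hαall⟩ := geomOrd_iff.mp hr
    have hαG' : α ≤ G' := hαH.trans hHcov.le
    have hαG₀ : ¬α ≤ G₀ := fun h => hαH' (le_inf h hαG')
    have hαγ : Fintype.equivFin L α < Fintype.equivFin L γ := hγall α hαa hαG' hαG₀
    have hγF : γ ≤ F := hγG₀.trans hG₀F.le
    obtain ⟨hcov, hmeet⟩ := geom_step hatomic hsemimod hHcov hG'F hγa hγF hγG'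
    have hrG : geomOrd (H ⊔ γ) G' := by
      refine geomOrd_iff.mpr ⟨γ, hγa, le_sup_right, hγG', ?_⟩
      intro b hb hbG' hbHγ
      have hbH : ¬b ≤ H := fun h => hbHγ (h.trans le_sup_left)
      by_cases hbG₀ : b ≤ G₀
      · exact lt_trans (hαall b hb (le_inf hbG₀ hbG') hbH) hαγ
      · exact hγall b hb hbG' hbG₀
    have hGmem : H ⊔ γ ∈ 𝒢 := hseg.2 _ _ hG'𝒢 hcov hrG
    exact ⟨hHcov, H ⊔ γ, hGmem, hmeet.symm⟩
end

section
/- Let M be a simple matroid on ground set [n] = {1,...,n}. Order flats by: F' ≻ F if rk F' > rk F, or rk F' = rk F and, writing both flats as decreasing sequences of their elements, F' precedes F lexicographically (the first position where they differ has a smaller element in F'). Then for any two hyperplanes H ≺ H' of M, there exists a hyperplane H'' ≺ H' such that H'' ∧ H' is a coatom of the interval [∅, H'] and H ∧ H' ≤ H''. -/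
open MvPolynomial
open scoped Classical

/-- The rank of a set `X` in a matroid `M`: the largest cardinality of an
independent subset of `X`. -/
noncomputable def mrk {α : Type*} (M : Matroid α) (X : Set α) : ℕ :=
  sSup {n | ∃ I, M.Indep I ∧ I ⊆ X ∧ I.ncard = n}

/-- A matroid is simple if it has no loops and no parallel pairs, i.e. every
subset of the ground set with at most two elements is independent. -/
def MSimple {α : Type*} (M : Matroid α) : Prop :=
  ∀ i j, i ∈ M.E → j ∈ M.E → M.Indep {i, j}

/-- The nonempty flats of a matroid, indexing the variables of the Chow ring. -/
def FlatNE {α : Type*} (M : Matroid α) : Type _ := {F : Set α // M.IsFlat F ∧ F.Nonempty}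

/-- The defining ideal `I_M + J_M` of the Chow ring of a matroid:
`I_M` is generated by the linear forms `∑_{F ∋ i} x_F` for `i ∈ E`, and
`J_M` by the products `x_F x_G` for incomparable nonempty flats `F, G`. -/
noncomputable def chowIdeal {α : Type*} (M : Matroid α) : Ideal (MvPolynomial (FlatNE M) ℚ) :=
  Ideal.span {p | ∃ i ∈ M.E, p = ∑ᶠ F : FlatNE M, if i ∈ F.1 then X F else 0} ⊔
  Ideal.span {p | ∃ F G : FlatNE M, ¬F.1 ⊆ G.1 ∧ ¬G.1 ⊆ F.1 ∧ p = X F * X G}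
open scoped Classical in
/-- The elements of a finite set of naturals, listed in decreasing order. -/
noncomputable def descList (X : Set ℕ) : List ℕ :=
  if h : X.Finite then (h.toFinset.sort (· ≤ ·)).reverse else []

/-- The order on flats of a matroid on a set of naturals: `F ≺ F'` iff
`rk F < rk F'`, or `rk F = rk F'` and, writing both flats as decreasing lists
of their elements, the two lists agree before position `ℓ` and the entry of
`F'` at position `ℓ` is smaller than that of `F`. -/
noncomputable def FlatPrec (M : Matroid ℕ) (F F' : Set ℕ) : Prop :=
  mrk M F < mrk M F' ∨
    (mrk M F = mrk M F' ∧ ∃ ℓ : ℕ,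
      (∀ p < ℓ, (descList F')[p]? = (descList F)[p]?) ∧
      ∃ a b : ℕ, (descList F')[ℓ]? = some a ∧ (descList F)[ℓ]? = some b ∧ a < b)


namespace FPLaux
open Set Matroid

variable {M : Matroid ℕ} {X Y I J F F' : Set ℕ}

lemma mrkSet_nonempty (M : Matroid ℕ) (X : Set ℕ) :
    {n | ∃ I, M.Indep I ∧ I ⊆ X ∧ I.ncard = n}.Nonempty :=
  ⟨0, ∅, M.empty_indep, empty_subset _, by simp⟩

lemma mrkSet_bddAbove (hE : M.E.Finite) (X : Set ℕ) :
    BddAbove {n | ∃ I, M.Indep I ∧ I ⊆ X ∧ I.ncard = n} := by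
  refine ⟨M.E.ncard, ?_⟩
  rintro n ⟨I, hI, -, rfl⟩
  exact Set.ncard_le_ncard hI.subset_ground hE

lemma le_mrk (hE : M.E.Finite) (hI : M.Indep I) (hIX : I ⊆ X) : I.ncard ≤ mrk M X :=
  le_csSup (mrkSet_bddAbove hE X) ⟨I, hI, hIX, rfl⟩

lemma mrk_le {m : ℕ} (h : ∀ I, M.Indep I → I ⊆ X → I.ncard ≤ m) : mrk M X ≤ m :=
  csSup_le (mrkSet_nonempty M X) (by rintro n ⟨I, hI, hIX, rfl⟩; exact h I hI hIX)

lemma basis'_mrk_eq (hE : M.E.Finite) (hI : M.IsBasis' I X) : mrk M X = I.ncard := by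
  refine le_antisymm (mrk_le fun J hJ hJX => ?_) (le_mrk hE hI.indep hI.subset)
  obtain ⟨I', hI', hJI'⟩ := hJ.subset_isBasis'_of_subset hJX
  have h1 : J.ncard ≤ I'.ncard :=
    Set.ncard_le_ncard hJI' (hE.subset hI'.indep.subset_ground)
  have h2 : I'.ncard = I.ncard := by
    rw [Set.ncard_def, Set.ncard_def, hI'.encard_eq_encard hI]
  omega

lemma mrk_mono (hE : M.E.Finite) (hXY : X ⊆ Y) : mrk M X ≤ mrk M Y :=
  mrk_le fun I hI hIX => le_mrk hE hI (hIX.trans hXY)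

lemma mrk_closure (hE : M.E.Finite) (hX : X ⊆ M.E) : mrk M (M.closure X) = mrk M X := by
  obtain ⟨I, hI⟩ := M.exists_isBasis X hX
  have h2 : M.IsBasis I (M.closure X) :=
    hI.indep.isBasis_of_subset_of_subset_closure (hI.subset.trans (M.subset_closure X hX))
      (by rw [hI.closure_eq_closure])
  rw [basis'_mrk_eq hE hI.isBasis', basis'_mrk_eq hE h2.isBasis']

lemma flat_inter (hF : M.IsFlat F) (hF' : M.IsFlat F') : M.IsFlat (F ∩ F') := by
  have := Matroid.IsFlat.iInter (M := M) (Fs := fun b : Bool => if b then F else F')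
    (by simp [hF, hF'])
  have e : (⋂ b : Bool, if b then F else F') = F ∩ F' := by
    ext x; simp [Set.mem_iInter, Bool.forall_bool, and_comm]
  rwa [e] at this

lemma flat_eq_of_subset_of_mrk_le (hE : M.E.Finite) (hF : M.IsFlat F) (hF' : M.IsFlat F')
    (hss : F ⊆ F') (hr : mrk M F' ≤ mrk M F) : F = F' := by
  obtain ⟨I, hI⟩ := M.exists_isBasis F hF.subset_ground
  obtain ⟨J, hJ, hIJ⟩ := hI.indep.subset_isBasis_of_subset (hI.subset.trans hss) hF'.subset_ground
  have hc : J.ncard ≤ I.ncard := by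
    have e1 := basis'_mrk_eq hE hJ.isBasis'
    have e2 := basis'_mrk_eq hE hI.isBasis'
    omega
  have hIJ' : I = J :=
    Set.eq_of_subset_of_ncard_le hIJ hc (hE.subset hJ.indep.subset_ground)
  refine subset_antisymm hss ?_
  have h1 : F' ⊆ M.closure J := hJ.subset_closure
  have h2 : M.closure J ⊆ F := by
    rw [← hIJ']
    exact (M.closure_subset_closure hI.subset).trans (by rw [hF.closure])
  exact h1.trans h2

lemma flat_mrk_lt (hE : M.E.Finite) (hF : M.IsFlat F) (hF' : M.IsFlat F')
    (hss : F ⊆ F') (hne : F ≠ F') : mrk M F < mrk M F' :=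
  lt_of_le_of_ne (mrk_mono hE hss)
    (fun h => hne (flat_eq_of_subset_of_mrk_le hE hF hF' hss h.ge))


open Set List

lemma descList_sorted (X : Set ℕ) : (descList X).Pairwise (· > ·) := by
  unfold descList; split
  · rw [List.pairwise_reverse]
    exact (Finset.sortedLT_sort _).pairwise
  · simp

lemma mem_descList {X : Set ℕ} (hX : X.Finite) {a : ℕ} : a ∈ descList X ↔ a ∈ X := by
  rw [descList, dif_pos hX, List.mem_reverse, Finset.mem_sort, Set.Finite.mem_toFinset]

lemma descList_nodup (X : Set ℕ) : (descList X).Nodup := by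
  unfold descList; split
  · exact List.nodup_reverse.mpr (Finset.sort_nodup _ _)
  · simp

lemma sorted_getElem?_lt {l : List ℕ} (hl : l.Pairwise (· > ·)) {i j x y : ℕ}
    (hx : l[i]? = some x) (hy : l[j]? = some y) (hij : i < j) : y < x := by
  rw [List.getElem?_eq_some_iff] at hx hy
  obtain ⟨hi, rfl⟩ := hx
  obtain ⟨hj, rfl⟩ := hy
  exact List.pairwise_iff_getElem.mp hl i j hi hj hij

lemma descList_index_lt {X : Set ℕ} (hX : X.Finite) {ℓ a y : ℕ}
    (ha : (descList X)[ℓ]? = some a) (hy : y ∈ X) (hlt : a < y) :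
    ∃ p < ℓ, (descList X)[p]? = some y := by
  obtain ⟨q, hq, hqe⟩ := List.mem_iff_getElem.mp ((mem_descList hX).mpr hy)
  have hq' : (descList X)[q]? = some y := List.getElem?_eq_some_iff.mpr ⟨hq, hqe⟩
  rcases lt_trichotomy q ℓ with h | h | h
  · exact ⟨q, h, hq'⟩
  · rw [h, ha] at hq'
    exact absurd (Option.some_inj.mp hq') (by omega)
  · exact absurd (sorted_getElem?_lt (descList_sorted X) ha hq' h) (by omega)

lemma descList_split {X : Set ℕ} (hX : X.Finite) (m : ℕ) :
    descList X = descList {y ∈ X | m < y} ++ descList {y ∈ X | y ≤ m} := by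
  have h1 : ({y ∈ X | m < y} : Set ℕ).Finite := hX.subset (sep_subset _ _)
  have h2 : ({y ∈ X | y ≤ m} : Set ℕ).Finite := hX.subset (sep_subset _ _)
  refine (fun hp hs => List.Perm.eq_of_pairwise' (descList_sorted X) hs hp) ?_ ?_
  · refine List.perm_of_nodup_nodup_toFinset_eq (descList_nodup X) ?_ ?_
    · rw [List.nodup_append]
      refine ⟨descList_nodup _, descList_nodup _, ?_⟩
      intro x hx x' hx' hxx'
      subst hxx'
      rw [mem_descList h1] at hx
      rw [mem_descList h2] at hx'
      obtain ⟨-, h⟩ := hx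
      obtain ⟨-, h'⟩ := hx'
      omega
    · ext x
      simp only [List.mem_toFinset, List.mem_append, mem_descList hX, mem_descList h1,
        mem_descList h2, Set.mem_setOf_eq]
      constructor
      · intro hx
        rcases le_or_gt x m with h | h
        · exact Or.inr ⟨hx, h⟩
        · exact Or.inl ⟨hx, h⟩
      · rintro (⟨hx, -⟩ | ⟨hx, -⟩) <;> exact hx
  · rw [List.pairwise_append]
    refine ⟨descList_sorted _, descList_sorted _, fun x hx y hy => ?_⟩
    rw [mem_descList h1] at hx
    rw [mem_descList h2] at hy
    obtain ⟨-, h⟩ := hx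
    obtain ⟨-, h'⟩ := hy
    omega

lemma descList_zero_max {X : Set ℕ} (hX : X.Finite) {m : ℕ} (hm : m ∈ X)
    (hmax : ∀ y ∈ X, y ≤ m) : (descList X)[0]? = some m := by
  obtain ⟨q, hq, hqe⟩ := List.mem_iff_getElem.mp ((mem_descList hX).mpr hm)
  have hq' : (descList X)[q]? = some m := List.getElem?_eq_some_iff.mpr ⟨hq, hqe⟩
  rcases Nat.eq_zero_or_pos q with rfl | hpos
  · exact hq'
  · have h0 : 0 < (descList X).length := by omega
    have h0' : (descList X)[0]? = some ((descList X)[0]) := List.getElem?_eq_some_iff.mpr ⟨h0, rfl⟩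
    have hlt := sorted_getElem?_lt (descList_sorted X) h0' hq' hpos
    have hmem : (descList X)[0] ∈ X := (mem_descList hX).mp (List.getElem_mem h0)
    exact absurd (hmax _ hmem) (by omega)

lemma descList_lex {A B : Set ℕ} (hA : A.Finite) (hB : B.Finite) {m : ℕ}
    (hmB : m ∈ B) (hmA : m ∉ A) (hcommon : ∀ y, m < y → (y ∈ A ↔ y ∈ B))
    (hAne : ∃ a ∈ A, a < m) :
    ∃ ℓ : ℕ, (∀ p < ℓ, (descList A)[p]? = (descList B)[p]?) ∧
      ∃ a b : ℕ, (descList A)[ℓ]? = some a ∧ (descList B)[ℓ]? = some b ∧ a < b := by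
  have hCeq : {y ∈ B | m < y} = {y ∈ A | m < y} := by
    ext y; simp only [Set.mem_setOf_eq]
    exact ⟨fun ⟨h1, h2⟩ => ⟨(hcommon y h2).mpr h1, h2⟩, fun ⟨h1, h2⟩ => ⟨(hcommon y h2).mp h1, h2⟩⟩
  have hsA := descList_split hA m
  have hsB := descList_split hB m
  rw [hCeq] at hsB
  set C := descList {y ∈ A | m < y} with hC
  refine ⟨C.length, fun p hp => ?_, ?_⟩
  · rw [hsA, hsB, List.getElem?_append, List.getElem?_append, if_pos hp, if_pos hp]
  · obtain ⟨a₀, ha₀, ha₀m⟩ := hAne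
    have hAfin : ({y ∈ A | y ≤ m} : Set ℕ).Finite := hA.subset (sep_subset _ _)
    have hAmem : a₀ ∈ descList {y ∈ A | y ≤ m} := (mem_descList hAfin).mpr ⟨ha₀, by omega⟩
    have hlen : 0 < (descList {y ∈ A | y ≤ m}).length := List.length_pos_iff.mpr (by
      intro h; rw [h] at hAmem; simp at hAmem)
    set a := (descList {y ∈ A | y ≤ m})[0]
    have haA : a ∈ A ∧ a ≤ m := by
      have := (mem_descList hAfin).mp (List.getElem_mem hlen)
      exact this
    have ham : a < m := lt_of_le_of_ne haA.2 (fun h => hmA (h ▸ haA.1))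
    have hBfin : ({y ∈ B | y ≤ m} : Set ℕ).Finite := hB.subset (sep_subset _ _)
    refine ⟨a, m, ?_, ?_, ham⟩
    · rw [hsA, List.getElem?_append, if_neg (lt_irrefl _), Nat.sub_self]
      exact List.getElem?_eq_some_iff.mpr ⟨hlen, rfl⟩
    · rw [hsB, List.getElem?_append, if_neg (lt_irrefl _), Nat.sub_self]
      exact descList_zero_max hBfin ⟨hmB, le_refl m⟩ (fun y hy => hy.2)


lemma prec_extract {H H' : Set ℕ} (hHf : H.Finite) (hH'f : H'.Finite) {ℓ a b : ℕ}
    (hagree : ∀ p < ℓ, (descList H')[p]? = (descList H)[p]?)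
    (ha : (descList H')[ℓ]? = some a) (hb : (descList H)[ℓ]? = some b) (hab : a < b) :
    b ∈ H ∧ b ∉ H' ∧ ∀ y ∈ H', b < y → y ∈ H := by
  have hbH : b ∈ H := (mem_descList hHf).mp (List.mem_of_getElem? hb)
  refine ⟨hbH, fun hbH' => ?_, fun y hy hby => ?_⟩
  · obtain ⟨p, hp, hp'⟩ := descList_index_lt hH'f ha hbH' hab
    rw [hagree p hp] at hp'
    exact absurd (sorted_getElem?_lt (descList_sorted H) hp' hb hp) (by omega)
  · obtain ⟨p, hp, hp'⟩ := descList_index_lt hH'f ha hy (by omega)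
    rw [hagree p hp] at hp'
    exact (mem_descList hHf).mp (List.mem_of_getElem? hp')


lemma flat_closure (M : Matroid ℕ) (X : Set ℕ) : M.IsFlat (M.closure X) := by
  rw [Matroid.closure_def]
  have : Nonempty {F // M.IsFlat F ∧ X ∩ M.E ⊆ F} :=
    ⟨⟨M.E, M.ground_isFlat, Set.inter_subset_right⟩⟩
  have h := Matroid.IsFlat.iInter (M := M)
    (Fs := fun F : {F // M.IsFlat F ∧ X ∩ M.E ⊆ F} => F.1) (fun F => F.2.1)
  have e : (⋂ F : {F // M.IsFlat F ∧ X ∩ M.E ⊆ F}, F.1) = ⋂₀ {F | M.IsFlat F ∧ X ∩ M.E ⊆ F} := by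
    ext x
    simp only [Set.mem_sInter, Set.mem_iInter, Subtype.forall, Set.mem_setOf_eq]
  rwa [e] at h

end FPLaux

/-- Let `M` be a simple matroid on the ground set
`[n] = {1, …, n}` and let `H ≺ H'` be hyperplanes of `M`.  Then there exists a
hyperplane `H'' ≺ H'` such that `H'' ∧ H' = H'' ∩ H'` is a coatom of the
interval `[∅, H']` in the lattice of flats (i.e. a flat of rank `rk H' − 1`
contained in `H'`), and `H ∧ H' = H ∩ H' ≤ H''`. -/
theorem flatPrec_locally_rooted (n : ℕ) (M : Matroid ℕ)
    (hE : M.E = Set.Icc 1 n) (hs : MSimple M)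
    (H H' : Set ℕ) (hH : M.IsFlat H) (hH' : M.IsFlat H')
    (hHcoat : mrk M H = mrk M M.E - 1) (hH'coat : mrk M H' = mrk M M.E - 1)
    (hprec : FlatPrec M H H') :
    ∃ H'' : Set ℕ, M.IsFlat H'' ∧ mrk M H'' = mrk M M.E - 1 ∧ FlatPrec M H'' H' ∧
      M.IsFlat (H'' ∩ H') ∧ mrk M (H'' ∩ H') = mrk M H' - 1 ∧ H ∩ H' ⊆ H'' := by
  classical
  have hEfin : M.E.Finite := by rw [hE]; exact Set.finite_Icc 1 n
  have hHfin : H.Finite := hEfin.subset hH.subset_ground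
  have hH'fin : H'.Finite := hEfin.subset hH'.subset_ground
  have hreq : mrk M H = mrk M H' := by rw [hHcoat, hH'coat]
  unfold FlatPrec at hprec
  rcases hprec with hlt | ⟨-, ℓ, hagree, a, b, ha, hb, hab⟩
  · omega
  obtain ⟨hbH, hbH', habove⟩ := FPLaux.prec_extract hHfin hH'fin hagree ha hb hab
  have hGflat : M.IsFlat (H ∩ H') := FPLaux.flat_inter hH hH'
  have hGne : H ∩ H' ≠ H' := by
    intro h
    have hsub : H' ⊆ H := by rw [← h]; exact Set.inter_subset_left
    have heq := FPLaux.flat_eq_of_subset_of_mrk_le hEfin hH' hH hsub (le_of_eq hreq)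
    exact hbH' (by rw [heq]; exact hbH)
  have hGrk : mrk M (H ∩ H') < mrk M H' :=
    FPLaux.flat_mrk_lt hEfin hGflat hH' Set.inter_subset_right hGne
  obtain ⟨I, hI⟩ := M.exists_isBasis (H ∩ H') hGflat.subset_ground
  obtain ⟨J, hJ, hIJ⟩ := hI.indep.subset_isBasis_of_subset
    (hI.subset.trans Set.inter_subset_right) hH'.subset_ground
  have hIc := FPLaux.basis'_mrk_eq hEfin hI.isBasis'
  have hJc := FPLaux.basis'_mrk_eq hEfin hJ.isBasis'
  have hJfin : J.Finite := hEfin.subset hJ.indep.subset_ground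
  have hne : I ≠ J := fun h => by rw [h] at hIc; omega
  obtain ⟨x, hxJ, hxI⟩ := Set.exists_of_ssubset (ssubset_of_subset_of_ne hIJ hne)
  set J₀ := J \ {x} with hJ₀def
  have hJ₀ind : M.Indep J₀ := hJ.indep.subset Set.diff_subset
  have hJ₀fin : J₀.Finite := hJfin.subset Set.diff_subset
  set K := M.closure J₀ with hKdef
  have hKH' : K ⊆ H' := by
    have h1 : M.closure J₀ ⊆ M.closure J := M.closure_subset_closure Set.diff_subset
    rwa [hJ.closure_eq_closure, hH'.closure] at h1
  have hbE : b ∈ M.E := hH.subset_ground hbH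
  have hbK : b ∉ K := fun h => hbH' (hKH' h)
  have hbJ₀ : b ∉ J₀ := fun h => hbK (M.subset_closure J₀ hJ₀ind.subset_ground h)
  set J'' := insert b J₀ with hJ''def
  have hJ''ind : M.Indep J'' := (hJ₀ind.insert_indep_iff_of_notMem hbJ₀).mpr ⟨hbE, hbK⟩
  set H'' := M.closure J'' with hH''def
  have hH''flat : M.IsFlat H'' := FPLaux.flat_closure M J''
  have hH''fin : H''.Finite := hEfin.subset hH''flat.subset_ground
  have hJ₀c : J₀.ncard + 1 = J.ncard := Set.ncard_diff_singleton_add_one hxJ hJfin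
  have hJ''c : J''.ncard = J₀.ncard + 1 := Set.ncard_insert_of_notMem hbJ₀ hJ₀fin
  have hrkH'' : mrk M H'' = mrk M H' := by
    have h1 : mrk M H'' = J''.ncard := by
      rw [hH''def, FPLaux.mrk_closure hEfin hJ''ind.subset_ground]
      exact FPLaux.basis'_mrk_eq hEfin hJ''ind.isBasis_self.isBasis'
    omega
  have hrkK : mrk M K = J₀.ncard := by
    rw [hKdef, FPLaux.mrk_closure hEfin hJ₀ind.subset_ground]
    exact FPLaux.basis'_mrk_eq hEfin hJ₀ind.isBasis_self.isBasis'
  have hGK : H ∩ H' ⊆ K := by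
    have h1 : H ∩ H' ⊆ M.closure I := hI.subset_closure
    have h2 : I ⊆ J₀ := Set.subset_diff_singleton hIJ hxI
    exact h1.trans (M.closure_subset_closure h2)
  have hKH'' : K ⊆ H'' := M.closure_subset_closure (Set.subset_insert b J₀)
  have hbH'' : b ∈ H'' := M.subset_closure J'' hJ''ind.subset_ground (Set.mem_insert b J₀)
  set D := (H' \ H'') ∪ (H'' \ H') with hDdef
  have hDfin : D.Finite := hH'fin.diff.union hH''fin.diff
  have hbD : b ∈ D := Or.inr ⟨hbH'', hbH'⟩
  obtain ⟨m, hmD, hmmax⟩ := Set.Finite.exists_maximalFor id D hDfin ⟨b, hbD⟩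
  have hmax : ∀ y ∈ D, y ≤ m := by
    intro y hy
    by_contra h
    push_neg at h
    have := hmmax hy (le_of_lt h)
    simp only [id] at this
    omega
  have hm : m ∈ H'' \ H' := by
    rcases hmD with ⟨hmH', hmH''⟩ | h
    · exfalso
      rcases lt_or_ge b m with hbm | hmb
      · exact hmH'' (hKH'' (hGK ⟨habove m hmH' hbm, hmH'⟩))
      · have hbm' : b ≤ m := hmax b hbD
        have : m = b := by omega
        exact hbH' (this ▸ hmH')
    · exact h
  have hcommon : ∀ y, m < y → (y ∈ H' ↔ y ∈ H'') := by
    intro y hy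
    by_contra h
    have hyD : y ∈ D := by
      rcases em (y ∈ H') with h1 | h1 <;> rcases em (y ∈ H'') with h2 | h2
      · exact absurd (iff_of_true h1 h2) h
      · exact Or.inl ⟨h1, h2⟩
      · exact Or.inr ⟨h2, h1⟩
      · exact absurd (iff_of_false h1 h2) h
    exact absurd (hmax y hyD) (by omega)
  have hAne : ∃ a' ∈ H', a' < m := by
    by_contra h
    push_neg at h
    have hsub : H' ⊆ H'' := by
      intro y hy
      have h1 : m ≤ y := h y hy
      have h2 : m ≠ y := fun e => hm.2 (e ▸ hy)
      exact (hcommon y (lt_of_le_of_ne h1 h2)).mp hy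
    have heq := FPLaux.flat_eq_of_subset_of_mrk_le hEfin hH' hH''flat hsub (le_of_eq hrkH'')
    exact hm.2 (by rw [heq]; exact hm.1)
  obtain ⟨ℓ', hagree', a', b', ha', hb', hab'⟩ :=
    FPLaux.descList_lex hH'fin hH''fin hm.1 hm.2 hcommon hAne
  have hPrec : FlatPrec M H'' H' := by
    unfold FlatPrec
    exact Or.inr ⟨hrkH'', ℓ', hagree', a', b', ha', hb', hab'⟩
  have hIntflat : M.IsFlat (H'' ∩ H') := FPLaux.flat_inter hH''flat hH'
  have hIntne : H'' ∩ H' ≠ H' := by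
    intro h
    have hsub : H' ⊆ H'' := by rw [← h]; exact Set.inter_subset_left
    have heq := FPLaux.flat_eq_of_subset_of_mrk_le hEfin hH' hH''flat hsub (le_of_eq hrkH'')
    exact hm.2 (by rw [heq]; exact hm.1)
  have hIntlt : mrk M (H'' ∩ H') < mrk M H' :=
    FPLaux.flat_mrk_lt hEfin hIntflat hH' Set.inter_subset_right hIntne
  have hIntge : J₀.ncard ≤ mrk M (H'' ∩ H') := by
    rw [← hrkK]
    exact FPLaux.mrk_mono hEfin (Set.subset_inter hKH'' hKH')
  exact ⟨H'', hH''flat, by rw [hrkH'', hH'coat], hPrec, hIntflat, by omega, hGK.trans hKH''⟩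
end

section
/- For a simple matroid M, the atom-free presentation yields a ring isomorphic to the Feichtner–Yuzvinsky Chow ring: Chow_FY(M) ≅ Chow_af(M), via the change of variables x_i ↦ x_i − Σ_{F ⊋ i} x_F for atoms i followed by eliminating the atom variables. -/
open MvPolynomial
open scoped Classical

/-- The flats of rank at least 2 of a matroid, indexing the variables of the
atom-free presentation of the Chow ring. -/
def FlatGE2 {α : Type*} (M : Matroid α) : Type _ := {F : Set α // M.IsFlat F ∧ 2 ≤ mrk M F}

/-- The defining ideal `I_af(M)` of the atom-free presentation of the Chow ring
of a matroid `M`, generated by: `x_F x_{F'}` for incomparable flats `F, F'` of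
rank at least 2; `x_F · ∑_{F' ⊇ F ∨ i} x_{F'}` for `F` of rank at least 2 and
`i ∈ E ∖ F`; and `∑_{F ⊇ i ∨ j} x_F² + ∑_{F' ⊋ F ⊇ i ∨ j} 2 x_F x_{F'}` for
distinct `i, j ∈ E`. -/
noncomputable def chowAfIdeal {α : Type*} (M : Matroid α) :
    Ideal (MvPolynomial (FlatGE2 M) ℚ) :=
  Ideal.span
    ({p | ∃ F G : FlatGE2 M, ¬F.1 ⊆ G.1 ∧ ¬G.1 ⊆ F.1 ∧ p = X F * X G} ∪
     {p | ∃ (F : FlatGE2 M) (i : α), i ∈ M.E ∧ i ∉ F.1 ∧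
        p = X F * ∑ᶠ F' : FlatGE2 M, if F.1 ∪ {i} ⊆ F'.1 then X F' else 0} ∪
     {p | ∃ i j : α, i ∈ M.E ∧ j ∈ M.E ∧ i ≠ j ∧
        p = (∑ᶠ F : FlatGE2 M, if i ∈ F.1 ∧ j ∈ F.1 then X F ^ 2 else 0) +
            ∑ᶠ F : FlatGE2 M, ∑ᶠ F' : FlatGE2 M,
              if i ∈ F.1 ∧ j ∈ F.1 ∧ F.1 ⊂ F'.1 then 2 * (X F * X F') else 0})
attribute [reducible] FlatNE FlatGE2

section Sums
variable {α : Type*} {R : Type*} [CommRing R]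

lemma ite_decomp6 (a b iA jB jA iB : Prop) (v : R) :
    (if iA ∧ jB then v else 0) =
      (if ¬a ∧ ¬b ∧ iA ∧ jB then v else 0) +
      (if a ∧ b ∧ iA ∧ jB then v else 0) +
      (if a ∧ ¬b ∧ jA ∧ iA ∧ jB then v else 0) +
      (if ¬a ∧ b ∧ iB ∧ iA ∧ jB then v else 0) +
      (if a ∧ ¬b ∧ ¬jA ∧ iA ∧ jB then v else 0) +
      (if ¬a ∧ b ∧ ¬iB ∧ iA ∧ jB then v else 0) := by
  by_cases ha : a <;> by_cases hb : b <;> by_cases h1 : iA <;> by_cases h2 : jB <;>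
    by_cases h3 : jA <;> by_cases h4 : iB <;> simp [ha, hb, h1, h2, h3, h4]

lemma small_identity {ι : Type*} [Fintype ι] (St : ι → Set α) (x : ι → R) (y : R)
    (A0 : Set α) (j : α) (hj : j ∉ A0) :
    ∑ B : ι, (if j ∈ St B then y * x B else 0) =
      (∑ B : ι, (if ¬A0 ⊆ St B ∧ ¬St B ⊆ A0 ∧ j ∈ St B then y * x B else 0)) +
      y * ∑ B : ι, (if A0 ∪ {j} ⊆ St B then x B else 0) := by
  rw [Finset.mul_sum, ← Finset.sum_add_distrib]
  refine Finset.sum_congr rfl fun B _ => ?_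
  rw [mul_ite, mul_zero]
  by_cases ha : A0 ⊆ St B <;> by_cases hjB : j ∈ St B
  · rw [if_pos hjB, if_neg (by tauto),
      if_pos (Set.union_subset ha (Set.singleton_subset_iff.mpr hjB)), zero_add]
  · rw [if_neg hjB, if_neg (by tauto),
      if_neg (fun h => hjB (h (Set.mem_union_right _ rfl))), add_zero]
  · rw [if_pos hjB, if_pos ⟨ha, fun hb => hj (hb hjB), hjB⟩,
      if_neg (fun h => ha ((Set.subset_union_left).trans h)), add_zero]
  · rw [if_neg hjB, if_neg (by tauto),
      if_neg (fun h => hjB (h (Set.mem_union_right _ rfl))), add_zero]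

lemma big_identity {ι : Type*} [Fintype ι] (St : ι → Set α) (hInj : Function.Injective St)
    (x : ι → R) (i j : α) :
    ∑ A : ι, ∑ B : ι, (if i ∈ St A ∧ j ∈ St B then x A * x B else 0) =
      (∑ A : ι, ∑ B : ι,
        (if ¬St A ⊆ St B ∧ ¬St B ⊆ St A ∧ i ∈ St A ∧ j ∈ St B then x A * x B else 0)) +
      ((∑ A : ι, (if i ∈ St A ∧ j ∈ St A then x A ^ 2 else 0)) +
       ∑ A : ι, ∑ B : ι,
        (if i ∈ St A ∧ j ∈ St A ∧ St A ⊂ St B then 2 * (x A * x B) else 0)) +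
      (∑ A : ι, (if i ∈ St A ∧ j ∉ St A then
          x A * ∑ B : ι, (if St A ∪ {j} ⊆ St B then x B else 0) else 0)) +
      (∑ B : ι, (if j ∈ St B ∧ i ∉ St B then
          x B * ∑ A : ι, (if St B ∪ {i} ⊆ St A then x A else 0) else 0)) := by
  have h1 : ∑ A : ι, ∑ B : ι, (if i ∈ St A ∧ j ∈ St B then x A * x B else 0) =
      (∑ A : ι, ∑ B : ι, (if ¬St A ⊆ St B ∧ ¬St B ⊆ St A ∧ i ∈ St A ∧ j ∈ St B
          then x A * x B else 0)) +
      (∑ A : ι, ∑ B : ι, (if St A ⊆ St B ∧ St B ⊆ St A ∧ i ∈ St A ∧ j ∈ St B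
          then x A * x B else 0)) +
      (∑ A : ι, ∑ B : ι, (if St A ⊆ St B ∧ ¬St B ⊆ St A ∧ j ∈ St A ∧ i ∈ St A ∧ j ∈ St B
          then x A * x B else 0)) +
      (∑ A : ι, ∑ B : ι, (if ¬St A ⊆ St B ∧ St B ⊆ St A ∧ i ∈ St B ∧ i ∈ St A ∧ j ∈ St B
          then x A * x B else 0)) +
      (∑ A : ι, ∑ B : ι, (if St A ⊆ St B ∧ ¬St B ⊆ St A ∧ ¬j ∈ St A ∧ i ∈ St A ∧ j ∈ St B
          then x A * x B else 0)) +
      (∑ A : ι, ∑ B : ι, (if ¬St A ⊆ St B ∧ St B ⊆ St A ∧ ¬i ∈ St B ∧ i ∈ St A ∧ j ∈ St B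
          then x A * x B else 0)) := by
    simp only [← Finset.sum_add_distrib]
    refine Finset.sum_congr rfl fun A _ => Finset.sum_congr rfl fun B _ =>
      ite_decomp6 _ _ _ _ _ _ _
  have hc2 : (∑ A : ι, ∑ B : ι, (if St A ⊆ St B ∧ St B ⊆ St A ∧ i ∈ St A ∧ j ∈ St B
        then x A * x B else 0)) =
      ∑ A : ι, (if i ∈ St A ∧ j ∈ St A then x A ^ 2 else 0) := by
    refine Finset.sum_congr rfl fun A _ => ?_
    by_cases hA : i ∈ St A ∧ j ∈ St A
    · rw [if_pos hA]
      rw [Finset.sum_congr rfl (fun B _ => if_congr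
        (show (St A ⊆ St B ∧ St B ⊆ St A ∧ i ∈ St A ∧ j ∈ St B) ↔ A = B from
          ⟨fun h => hInj (h.1.antisymm h.2.1),
           fun h => h ▸ ⟨subset_rfl, subset_rfl, hA.1, hA.2⟩⟩) rfl rfl)]
      rw [Finset.sum_ite_eq, if_pos (Finset.mem_univ A), sq]
    · rw [if_neg hA]
      refine Finset.sum_eq_zero fun B _ => ?_
      rw [if_neg]
      rintro ⟨ha, hb, hiA, hjB⟩
      exact hA ⟨hiA, hb hjB⟩
  have hc3 : (∑ A : ι, ∑ B : ι, (if St A ⊆ St B ∧ ¬St B ⊆ St A ∧ j ∈ St A ∧ i ∈ St A ∧ j ∈ St B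
        then x A * x B else 0)) =
      ∑ A : ι, ∑ B : ι, (if i ∈ St A ∧ j ∈ St A ∧ St A ⊂ St B then x A * x B else 0) := by
    refine Finset.sum_congr rfl fun A _ => Finset.sum_congr rfl fun B _ => if_congr ?_ rfl rfl
    rw [Set.ssubset_iff_subset_ne]
    constructor
    · rintro ⟨ha, hb, hjA, hiA, hjB⟩
      exact ⟨hiA, hjA, ha, fun h => hb (h ▸ subset_rfl)⟩
    · rintro ⟨hiA, hjA, ha, hne⟩
      exact ⟨ha, fun hb => hne (ha.antisymm hb), hjA, hiA, ha hjA⟩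
  have hc4 : (∑ A : ι, ∑ B : ι, (if ¬St A ⊆ St B ∧ St B ⊆ St A ∧ i ∈ St B ∧ i ∈ St A ∧ j ∈ St B
        then x A * x B else 0)) =
      ∑ A : ι, ∑ B : ι, (if i ∈ St A ∧ j ∈ St A ∧ St A ⊂ St B then x A * x B else 0) := by
    rw [Finset.sum_comm]
    refine Finset.sum_congr rfl fun B _ => Finset.sum_congr rfl fun A _ =>
      if_congr ?_ (mul_comm _ _) rfl
    rw [Set.ssubset_iff_subset_ne]
    constructor
    · rintro ⟨ha, hb, hiB, hiA, hjB⟩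
      exact ⟨hiB, hjB, hb, fun h => ha (h ▸ subset_rfl)⟩
    · rintro ⟨hiB, hjB, hb, hne⟩
      exact ⟨fun ha => hne (hb.antisymm ha), hb, hiB, hb hiB, hjB⟩
  have hcross : (∑ A : ι, ∑ B : ι,
        (if i ∈ St A ∧ j ∈ St A ∧ St A ⊂ St B then 2 * (x A * x B) else 0)) =
      (∑ A : ι, ∑ B : ι, (if i ∈ St A ∧ j ∈ St A ∧ St A ⊂ St B then x A * x B else 0)) +
      (∑ A : ι, ∑ B : ι, (if i ∈ St A ∧ j ∈ St A ∧ St A ⊂ St B then x A * x B else 0)) := by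
    rw [← Finset.sum_add_distrib]
    refine Finset.sum_congr rfl fun A _ => ?_
    rw [← Finset.sum_add_distrib]
    refine Finset.sum_congr rfl fun B _ => ?_
    split_ifs with h
    · ring
    · ring
  have hc5 : (∑ A : ι, ∑ B : ι, (if St A ⊆ St B ∧ ¬St B ⊆ St A ∧ ¬j ∈ St A ∧ i ∈ St A ∧ j ∈ St B
        then x A * x B else 0)) =
      ∑ A : ι, (if i ∈ St A ∧ j ∉ St A then
          x A * ∑ B : ι, (if St A ∪ {j} ⊆ St B then x B else 0) else 0) := by
    refine Finset.sum_congr rfl fun A _ => ?_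
    by_cases hA : i ∈ St A ∧ j ∉ St A
    · rw [if_pos hA, Finset.mul_sum]
      refine Finset.sum_congr rfl fun B _ => ?_
      rw [mul_ite, mul_zero]
      refine if_congr ?_ rfl rfl
      constructor
      · rintro ⟨ha, hb, hjA, hiA, hjB⟩
        exact Set.union_subset ha (Set.singleton_subset_iff.mpr hjB)
      · intro hsub
        have hjB : j ∈ St B := hsub (Set.mem_union_right _ rfl)
        exact ⟨(Set.subset_union_left).trans hsub, fun hb => hA.2 (hb hjB), hA.2, hA.1, hjB⟩
    · rw [if_neg hA]
      refine Finset.sum_eq_zero fun B _ => ?_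
      rw [if_neg]
      rintro ⟨ha, hb, hjA, hiA, hjB⟩
      exact hA ⟨hiA, hjA⟩
  have hc6 : (∑ A : ι, ∑ B : ι, (if ¬St A ⊆ St B ∧ St B ⊆ St A ∧ ¬i ∈ St B ∧ i ∈ St A ∧ j ∈ St B
        then x A * x B else 0)) =
      ∑ B : ι, (if j ∈ St B ∧ i ∉ St B then
          x B * ∑ A : ι, (if St B ∪ {i} ⊆ St A then x A else 0) else 0) := by
    rw [Finset.sum_comm]
    refine Finset.sum_congr rfl fun B _ => ?_
    by_cases hB : j ∈ St B ∧ i ∉ St B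
    · rw [if_pos hB, Finset.mul_sum]
      refine Finset.sum_congr rfl fun A _ => ?_
      rw [mul_ite, mul_zero]
      refine if_congr ?_ (mul_comm _ _) rfl
      constructor
      · rintro ⟨ha, hb, hiB, hiA, hjB⟩
        exact Set.union_subset hb (Set.singleton_subset_iff.mpr hiA)
      · intro hsub
        have hiA : i ∈ St A := hsub (Set.mem_union_right _ rfl)
        exact ⟨fun ha => hB.2 (ha hiA), (Set.subset_union_left).trans hsub, hB.2, hiA, hB.1⟩
    · rw [if_neg hB]
      refine Finset.sum_eq_zero fun A _ => ?_
      rw [if_neg]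
      rintro ⟨ha, hb, hiB, hiA, hjB⟩
      exact hB ⟨hjB, hiB⟩
  rw [h1, hc2, hc3, hc4, hc5, hc6, hcross]
  ring

end Sums


section Aux
variable {α : Type*} [Fintype α] {M : Matroid α}

noncomputable instance instFinFlatNE (M : Matroid α) : Fintype (FlatNE M) := by
  unfold FlatNE; infer_instance
noncomputable instance instFinFlatGE2 (M : Matroid α) : Fintype (FlatGE2 M) := by
  unfold FlatGE2; infer_instance

lemma mrk_nonempty (X : Set α) :
    {n | ∃ I, M.Indep I ∧ I ⊆ X ∧ I.ncard = n}.Nonempty :=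
  ⟨0, ∅, M.empty_indep, Set.empty_subset _, Set.ncard_empty _⟩

lemma mrk_bdd (X : Set α) :
    BddAbove {n | ∃ I, M.Indep I ∧ I ⊆ X ∧ I.ncard = n} := by
  refine ⟨Fintype.card α, fun n ⟨I, hI, hIX, hn⟩ => ?_⟩
  subst hn
  calc I.ncard ≤ (Set.univ : Set α).ncard :=
        Set.ncard_le_ncard (Set.subset_univ I) Set.finite_univ
    _ = Fintype.card α := by rw [Set.ncard_univ, Nat.card_eq_fintype_card]

lemma mrk_mono {X Y : Set α} (h : X ⊆ Y) : mrk M X ≤ mrk M Y :=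
  csSup_le_csSup (mrk_bdd Y) (mrk_nonempty X)
    (fun n ⟨I, h1, h2, h3⟩ => ⟨I, h1, h2.trans h, h3⟩)

lemma two_le_mrk {X : Set α} {i j : α} (hij : i ≠ j) (hi : i ∈ X) (hj : j ∈ X)
    (hind : M.Indep {i, j}) : 2 ≤ mrk M X :=
  le_csSup (mrk_bdd X) ⟨{i, j}, hind, by
    rw [Set.insert_subset_iff, Set.singleton_subset_iff]; exact ⟨hi, hj⟩,
    Set.ncard_pair hij⟩

lemma mrk_singleton_lt (i : α) : ¬ 2 ≤ mrk M ({i} : Set α) := by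
  have h1 : mrk M ({i} : Set α) ≤ 1 := by
    refine csSup_le (mrk_nonempty _) (fun n ⟨I, h1, h2, h3⟩ => ?_)
    subst h3
    calc I.ncard ≤ ({i} : Set α).ncard := Set.ncard_le_ncard h2 (Set.finite_singleton i)
      _ = 1 := Set.ncard_singleton i
  omega

lemma nonempty_of_two_le_mrk {F : Set α} (h : 2 ≤ mrk M F) : F.Nonempty := by
  by_contra hne
  rw [Set.not_nonempty_iff_eq_empty] at hne
  subst hne
  have h0 : mrk M (∅ : Set α) ≤ 0 := by
    refine csSup_le (mrk_nonempty _) (fun n ⟨I, h1, h2, h3⟩ => ?_)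
    rw [Set.subset_empty_iff] at h2
    subst h2; simp [Set.ncard_empty] at h3; omega
  omega

lemma mclosure_singleton (hs : MSimple M) {i : α} (hi : i ∈ M.E) :
    M.closure ({i} : Set α) = {i} := by
  apply Set.Subset.antisymm
  · intro j hj
    by_contra hji
    rw [Set.mem_singleton_iff] at hji
    have hjE : j ∈ M.E := M.closure_subset_ground _ hj
    have hind := hs i j hi hjE
    have h2 := hind.notMem_closure_diff_of_mem (show j ∈ ({i, j} : Set α) by simp)
    rw [Set.pair_diff_right (fun h => hji h.symm)] at h2
    exact h2 hj
  · exact M.subset_closure _ (by simpa)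

lemma singleton_flat (hs : MSimple M) {i : α} (hi : i ∈ M.E) : M.IsFlat ({i} : Set α) := by
  refine ⟨fun I X hIF hIX => ?_, by simpa⟩
  have h1 : X ⊆ M.closure I := hIX.subset_closure
  rwa [hIF.closure_eq_closure, mclosure_singleton hs hi] at h1

lemma flat_eq_singleton (hs : MSimple M) {F : Set α} (hF : M.IsFlat F) (hne : F.Nonempty)
    (h2 : ¬ 2 ≤ mrk M F) : ∃ i, i ∈ M.E ∧ F = {i} := by
  obtain ⟨i, hi⟩ := hne
  refine ⟨i, hF.subset_ground hi, ?_⟩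
  ext j
  simp only [Set.mem_singleton_iff]
  constructor
  · intro hj
    by_contra hji
    exact h2 (two_le_mrk hji hj hi (hs j i (hF.subset_ground hj) (hF.subset_ground hi)))
  · rintro rfl; exact hi

noncomputable def toNE (M : Matroid α) : FlatGE2 M → FlatNE M :=
  fun F => ⟨F.1, F.2.1, nonempty_of_two_le_mrk F.2.2⟩

@[simp] lemma toNE_val (F : FlatGE2 M) : (toNE M F).1 = F.1 := rfl

noncomputable def flatEquiv (M : Matroid α) (hs : MSimple M) :
    (FlatGE2 M ⊕ {i : α // i ∈ M.E}) ≃ FlatNE M where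
  toFun := Sum.elim (toNE M)
    (fun i => ⟨({i.1} : Set α), singleton_flat hs i.2, Set.singleton_nonempty _⟩)
  invFun F := if h : 2 ≤ mrk M F.1 then Sum.inl ⟨F.1, F.2.1, h⟩
    else Sum.inr ⟨F.2.2.some, F.2.1.subset_ground F.2.2.some_mem⟩
  left_inv := by
    rintro (F | i)
    · simp only [Sum.elim_inl]
      erw [dif_pos (show 2 ≤ mrk M (toNE M F).1 from F.2.2)]
      exact congrArg Sum.inl (Subtype.ext rfl)
    · simp only [Sum.elim_inr]
      erw [dif_neg (mrk_singleton_lt i.1)]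
      refine congrArg Sum.inr (Subtype.ext ?_)
      have := (Set.singleton_nonempty i.1).some_mem
      rwa [Set.mem_singleton_iff] at this
  right_inv := by
    intro F
    dsimp only
    by_cases h : 2 ≤ mrk M F.1
    · rw [dif_pos h]; exact Subtype.ext rfl
    · rw [dif_neg h]
      simp only [Sum.elim_inr]
      apply Subtype.ext
      obtain ⟨i, hiE, hFi⟩ := flat_eq_singleton hs F.2.1 F.2.2 h
      have hsome : F.2.2.some = i :=
        Set.mem_singleton_iff.mp (hFi.subset F.2.2.some_mem)
      show ({F.2.2.some} : Set α) = F.1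
      rw [hsome, hFi]

lemma sum_flatNE {N : Type*} [AddCommMonoid N] (hs : MSimple M) (f : FlatNE M → N) :
    ∑ F : FlatNE M, f F =
      (∑ F : FlatGE2 M, f (toNE M F)) +
      ∑ i : {i : α // i ∈ M.E},
        f ⟨({i.1} : Set α), singleton_flat hs i.2, Set.singleton_nonempty _⟩ := by
  rw [← Equiv.sum_comp (flatEquiv M hs) f, Fintype.sum_sum_type]
  rfl

end Aux


section Ideals
variable {α : Type*} [Fintype α] {M : Matroid α}

/-- The linear generator on the FY side. -/
noncomputable def LA (M : Matroid α) (i : α) : MvPolynomial (FlatNE M) ℚ :=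
  ∑ F : FlatNE M, if i ∈ F.1 then X F else 0

lemma lin_mem {i : α} (hi : i ∈ M.E) : LA M i ∈ chowIdeal M :=
  Ideal.mem_sup_left (Ideal.subset_span ⟨i, hi, (finsum_eq_sum_of_fintype _).symm⟩)

lemma quad_mem {F G : FlatNE M} (h1 : ¬F.1 ⊆ G.1) (h2 : ¬G.1 ⊆ F.1) :
    (X F * X G : MvPolynomial (FlatNE M) ℚ) ∈ chowIdeal M :=
  Ideal.mem_sup_right (Ideal.subset_span ⟨F, G, h1, h2, rfl⟩)

lemma lemK (A : FlatNE M) {j : α} (hj : j ∈ M.E) (hjA : j ∉ A.1) :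
    (X A * ∑ B : FlatNE M, if A.1 ∪ {j} ⊆ B.1 then X B else 0 :
      MvPolynomial (FlatNE M) ℚ) ∈ chowIdeal M := by
  have hid := small_identity (fun B : FlatNE M => B.1)
    (X : FlatNE M → MvPolynomial (FlatNE M) ℚ) (X A) A.1 j hjA
  have h2 : X A * LA M j =
      ∑ B : FlatNE M, if j ∈ B.1 then (X A * X B : MvPolynomial (FlatNE M) ℚ) else 0 := by
    rw [LA, Finset.mul_sum]
    exact Finset.sum_congr rfl fun B _ => by rw [mul_ite, mul_zero]
  have h3 : (X A * ∑ B : FlatNE M, if A.1 ∪ {j} ⊆ B.1 then X B else 0 :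
      MvPolynomial (FlatNE M) ℚ) = X A * LA M j -
      ∑ B : FlatNE M, if ¬A.1 ⊆ B.1 ∧ ¬B.1 ⊆ A.1 ∧ j ∈ B.1
        then (X A * X B : MvPolynomial (FlatNE M) ℚ) else 0 := by
    rw [h2, hid]; ring
  rw [h3]
  refine sub_mem (Ideal.mul_mem_left _ _ (lin_mem hj)) (Ideal.sum_mem _ fun B _ => ?_)
  split_ifs with h
  · exact quad_mem h.1 h.2.1
  · exact zero_mem _

lemma bigP_mem {i j : α} (hi : i ∈ M.E) (hj : j ∈ M.E) :
    ((∑ A : FlatNE M, if i ∈ A.1 ∧ j ∈ A.1 then X A ^ 2 else 0) +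
     ∑ A : FlatNE M, ∑ B : FlatNE M,
       if i ∈ A.1 ∧ j ∈ A.1 ∧ A.1 ⊂ B.1 then 2 * (X A * X B) else 0 :
      MvPolynomial (FlatNE M) ℚ) ∈ chowIdeal M := by
  have hb := big_identity (fun F : FlatNE M => F.1)
    (fun F G h => Subtype.ext h) (X : FlatNE M → MvPolynomial (FlatNE M) ℚ) i j
  have hL : LA M i * LA M j =
      ∑ A : FlatNE M, ∑ B : FlatNE M,
        if i ∈ A.1 ∧ j ∈ B.1 then (X A * X B : MvPolynomial (FlatNE M) ℚ) else 0 := by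
    rw [LA, LA, Finset.sum_mul_sum]
    refine Finset.sum_congr rfl fun A _ => Finset.sum_congr rfl fun B _ => ?_
    by_cases hA : i ∈ A.1 <;> by_cases hB : j ∈ B.1 <;> simp [hA, hB]
  have hP : ((∑ A : FlatNE M, if i ∈ A.1 ∧ j ∈ A.1 then X A ^ 2 else 0) +
     ∑ A : FlatNE M, ∑ B : FlatNE M,
       if i ∈ A.1 ∧ j ∈ A.1 ∧ A.1 ⊂ B.1 then 2 * (X A * X B) else 0 :
      MvPolynomial (FlatNE M) ℚ) =
      LA M i * LA M j -
      (∑ A : FlatNE M, ∑ B : FlatNE M,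
        if ¬A.1 ⊆ B.1 ∧ ¬B.1 ⊆ A.1 ∧ i ∈ A.1 ∧ j ∈ B.1
          then (X A * X B : MvPolynomial (FlatNE M) ℚ) else 0) -
      (∑ A : FlatNE M, if i ∈ A.1 ∧ j ∉ A.1 then
          X A * ∑ B : FlatNE M, (if A.1 ∪ {j} ⊆ B.1 then X B else 0) else 0) -
      (∑ B : FlatNE M, if j ∈ B.1 ∧ i ∉ B.1 then
          X B * ∑ A : FlatNE M, (if B.1 ∪ {i} ⊆ A.1 then X A else 0) else 0) := by
    rw [hL]
    linear_combination -hb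
  rw [hP]
  refine sub_mem (sub_mem (sub_mem (Ideal.mul_mem_left _ _ (lin_mem hj)) ?_) ?_) ?_
  · exact Ideal.sum_mem _ fun A _ => Ideal.sum_mem _ fun B _ => by
      split_ifs with h
      · exact quad_mem h.1 h.2.1
      · exact zero_mem _
  · refine Ideal.sum_mem _ fun A _ => ?_
    split_ifs with h
    · exact lemK A hj h.2
    · exact zero_mem _
  · refine Ideal.sum_mem _ fun B _ => ?_
    split_ifs with h
    · exact lemK B hi h.2
    · exact zero_mem _

/-! ### The atom-free side -/

lemma af_quad_mem {F G : FlatGE2 M} (h1 : ¬F.1 ⊆ G.1) (h2 : ¬G.1 ⊆ F.1) :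
    (X F * X G : MvPolynomial (FlatGE2 M) ℚ) ∈ chowAfIdeal M :=
  Ideal.subset_span (Or.inl (Or.inl ⟨F, G, h1, h2, rfl⟩))

lemma af_genb_mem (F : FlatGE2 M) {i : α} (hi : i ∈ M.E) (hiF : i ∉ F.1) :
    (X F * ∑ G : FlatGE2 M, if F.1 ∪ {i} ⊆ G.1 then X G else 0 :
      MvPolynomial (FlatGE2 M) ℚ) ∈ chowAfIdeal M :=
  Ideal.subset_span (Or.inl (Or.inr ⟨F, i, hi, hiF,
    by rw [finsum_eq_sum_of_fintype]⟩))

lemma af_genc_mem {i j : α} (hi : i ∈ M.E) (hj : j ∈ M.E) (hij : i ≠ j) :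
    ((∑ F : FlatGE2 M, if i ∈ F.1 ∧ j ∈ F.1 then X F ^ 2 else 0) +
     ∑ F : FlatGE2 M, ∑ F' : FlatGE2 M,
       if i ∈ F.1 ∧ j ∈ F.1 ∧ F.1 ⊂ F'.1 then 2 * (X F * X F') else 0 :
      MvPolynomial (FlatGE2 M) ℚ) ∈ chowAfIdeal M := by
  refine Ideal.subset_span (Or.inr ⟨i, j, hi, hj, hij, ?_⟩)
  rw [finsum_eq_sum_of_fintype, finsum_eq_sum_of_fintype]
  congr 1
  exact Finset.sum_congr rfl fun F _ => (finsum_eq_sum_of_fintype _).symm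

lemma afK (F' : FlatGE2 M) {j : α} (hj : j ∈ M.E) (hjF : j ∉ F'.1) :
    (∑ G : FlatGE2 M, if j ∈ G.1 then X F' * X G else 0 :
      MvPolynomial (FlatGE2 M) ℚ) ∈ chowAfIdeal M := by
  have hid := small_identity (fun B : FlatGE2 M => B.1)
    (X : FlatGE2 M → MvPolynomial (FlatGE2 M) ℚ) (X F') F'.1 j hjF
  rw [hid]
  refine add_mem (Ideal.sum_mem _ fun B _ => ?_) (af_genb_mem F' hj hjF)
  split_ifs with h
  · exact af_quad_mem h.1 h.2.1
  · exact zero_mem _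

lemma afC {i j : α} (hi : i ∈ M.E) (hj : j ∈ M.E) (hij : i ≠ j) :
    (∑ A : FlatGE2 M, ∑ B : FlatGE2 M,
      if i ∈ A.1 ∧ j ∈ B.1 then X A * X B else 0 :
      MvPolynomial (FlatGE2 M) ℚ) ∈ chowAfIdeal M := by
  have hb := big_identity (fun F : FlatGE2 M => F.1)
    (fun F G h => Subtype.ext h) (X : FlatGE2 M → MvPolynomial (FlatGE2 M) ℚ) i j
  rw [hb]
  refine add_mem (add_mem (add_mem ?_ ?_) ?_) ?_
  · exact Ideal.sum_mem _ fun A _ => Ideal.sum_mem _ fun B _ => by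
      split_ifs with h
      · exact af_quad_mem h.1 h.2.1
      · exact zero_mem _
  · exact af_genc_mem hi hj hij
  · refine Ideal.sum_mem _ fun A _ => ?_
    split_ifs with h
    · exact af_genb_mem A hj h.2
    · exact zero_mem _
  · refine Ideal.sum_mem _ fun B _ => ?_
    split_ifs with h
    · exact af_genb_mem B hi h.2
    · exact zero_mem _

end Ideals


section Maps
variable {α : Type*} [Fintype α]

/-- The variable assignment of the change of variables. -/
noncomputable def gmap (M : Matroid α) :
    FlatNE M → (MvPolynomial (FlatGE2 M) ℚ ⧸ chowAfIdeal M) :=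
  fun F => if h : 2 ≤ mrk M F.1 then Ideal.Quotient.mk (chowAfIdeal M) (X ⟨F.1, F.2.1, h⟩)
    else -∑ F' : FlatGE2 M,
      if F.1 ⊆ F'.1 then Ideal.Quotient.mk (chowAfIdeal M) (X F') else 0

variable {M : Matroid α}

lemma gmap_toNE (F : FlatGE2 M) :
    gmap M (toNE M F) = Ideal.Quotient.mk (chowAfIdeal M) (X F) := by
  unfold gmap
  rw [dif_pos (show 2 ≤ mrk M (toNE M F).1 from F.2.2)]
  exact congrArg _ (congrArg X (Subtype.ext rfl))

lemma gmap_singleton {i : α} (h1 : M.IsFlat {i} ∧ ({i} : Set α).Nonempty) :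
    gmap M ⟨{i}, h1⟩ =
      -∑ F' : FlatGE2 M,
        if i ∈ F'.1 then Ideal.Quotient.mk (chowAfIdeal M) (X F') else 0 := by
  unfold gmap
  rw [dif_neg (mrk_singleton_lt i)]
  exact congrArg Neg.neg (Finset.sum_congr rfl fun F' _ =>
    if_congr Set.singleton_subset_iff rfl rfl)

/-- The FY-to-atom-free algebra map on polynomials. -/
noncomputable def fA (M : Matroid α) :
    MvPolynomial (FlatNE M) ℚ →ₐ[ℚ] (MvPolynomial (FlatGE2 M) ℚ ⧸ chowAfIdeal M) :=
  aeval (gmap M)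

lemma fA_lin (hs : MSimple M) {i : α} (hi : i ∈ M.E) : fA M (LA M i) = 0 := by
  rw [LA, map_sum]
  have h1 : ∀ F : FlatNE M,
      fA M (if i ∈ F.1 then X F else 0) = if i ∈ F.1 then gmap M F else 0 := fun F => by
    rw [apply_ite (fA M), map_zero, fA, aeval_X]
  rw [Finset.sum_congr rfl fun F _ => h1 F,
    sum_flatNE hs (fun F : FlatNE M => if i ∈ F.1 then gmap M F else 0)]
  have h2 : ∀ F : FlatGE2 M,
      (if i ∈ (toNE M F).1 then gmap M (toNE M F) else 0) =
      (if i ∈ F.1 then Ideal.Quotient.mk (chowAfIdeal M) (X F) else 0) := fun F => by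
    rw [toNE_val, gmap_toNE]
  rw [Finset.sum_congr rfl fun F _ => h2 F]
  have h3 : (∑ k : {x : α // x ∈ M.E}, if i ∈ ({k.1} : Set α) then
      gmap M ⟨{k.1}, singleton_flat hs k.2, Set.singleton_nonempty _⟩ else 0) =
      gmap M ⟨{i}, singleton_flat hs hi, Set.singleton_nonempty _⟩ := by
    rw [Finset.sum_eq_single_of_mem ⟨i, hi⟩ (Finset.mem_univ _)
      (fun k _ hk => if_neg
        (fun hmem => hk (Subtype.ext (Set.mem_singleton_iff.mp hmem).symm)))]
    rw [if_pos (Set.mem_singleton i)]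
  erw [h3, gmap_singleton]
  exact add_neg_cancel _

lemma mixed_zero (F₂ : FlatGE2 M) {j : α} (hj : j ∈ M.E) (hjF : j ∉ F₂.1) :
    (Ideal.Quotient.mk (chowAfIdeal M) (X F₂)) *
      (∑ G' : FlatGE2 M, if j ∈ G'.1 then Ideal.Quotient.mk (chowAfIdeal M) (X G') else 0)
      = 0 := by
  have h : (Ideal.Quotient.mk (chowAfIdeal M) (X F₂)) *
      (∑ G' : FlatGE2 M, if j ∈ G'.1 then Ideal.Quotient.mk (chowAfIdeal M) (X G') else 0) =
      Ideal.Quotient.mk (chowAfIdeal M)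
        (∑ G' : FlatGE2 M, if j ∈ G'.1 then X F₂ * X G' else 0) := by
    rw [map_sum, Finset.mul_sum]
    refine Finset.sum_congr rfl fun G' _ => ?_
    rw [mul_ite, mul_zero, apply_ite (Ideal.Quotient.mk (chowAfIdeal M)), map_zero, map_mul]
  rw [h, Ideal.Quotient.eq_zero_iff_mem]
  exact afK F₂ hj hjF

lemma fA_quad (hs : MSimple M) {F G : FlatNE M} (h1 : ¬F.1 ⊆ G.1) (h2 : ¬G.1 ⊆ F.1) :
    fA M (X F * X G) = 0 := by
  rw [map_mul, fA, aeval_X, aeval_X]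
  by_cases hF : 2 ≤ mrk M F.1 <;> by_cases hG : 2 ≤ mrk M G.1
  · have eF : gmap M F = Ideal.Quotient.mk (chowAfIdeal M) (X ⟨F.1, F.2.1, hF⟩) := by
      unfold gmap; rw [dif_pos hF]
    have eG : gmap M G = Ideal.Quotient.mk (chowAfIdeal M) (X ⟨G.1, G.2.1, hG⟩) := by
      unfold gmap; rw [dif_pos hG]
    rw [eF, eG, ← map_mul, Ideal.Quotient.eq_zero_iff_mem]
    exact af_quad_mem h1 h2
  · obtain ⟨j, hjE, hGj⟩ := flat_eq_singleton hs G.2.1 G.2.2 hG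
    have eF : gmap M F = Ideal.Quotient.mk (chowAfIdeal M) (X ⟨F.1, F.2.1, hF⟩) := by
      unfold gmap; rw [dif_pos hF]
    have eG : gmap M G = -∑ F' : FlatGE2 M,
        if j ∈ F'.1 then Ideal.Quotient.mk (chowAfIdeal M) (X F') else 0 := by
      unfold gmap; rw [dif_neg hG]
      exact congrArg Neg.neg (Finset.sum_congr rfl fun F' _ =>
        if_congr (by rw [hGj, Set.singleton_subset_iff]) rfl rfl)
    have hjF : j ∉ F.1 := fun hmem => h2 (by
      rw [hGj, Set.singleton_subset_iff]; exact hmem)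
    rw [eF, eG]
    have hz := mixed_zero ⟨F.1, F.2.1, hF⟩ hjE hjF
    linear_combination -hz
  · obtain ⟨i, hiE, hFi⟩ := flat_eq_singleton hs F.2.1 F.2.2 hF
    have eG : gmap M G = Ideal.Quotient.mk (chowAfIdeal M) (X ⟨G.1, G.2.1, hG⟩) := by
      unfold gmap; rw [dif_pos hG]
    have eF : gmap M F = -∑ F' : FlatGE2 M,
        if i ∈ F'.1 then Ideal.Quotient.mk (chowAfIdeal M) (X F') else 0 := by
      unfold gmap; rw [dif_neg hF]
      exact congrArg Neg.neg (Finset.sum_congr rfl fun F' _ =>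
        if_congr (by rw [hFi, Set.singleton_subset_iff]) rfl rfl)
    have hiG : i ∉ G.1 := fun hmem => h1 (by
      rw [hFi, Set.singleton_subset_iff]; exact hmem)
    rw [eF, eG]
    have hz := mixed_zero ⟨G.1, G.2.1, hG⟩ hiE hiG
    linear_combination -hz
  · obtain ⟨i, hiE, hFi⟩ := flat_eq_singleton hs F.2.1 F.2.2 hF
    obtain ⟨j, hjE, hGj⟩ := flat_eq_singleton hs G.2.1 G.2.2 hG
    have hij : i ≠ j := by
      rintro rfl
      exact h1 (by rw [hFi, hGj])
    have eF : gmap M F = -∑ F' : FlatGE2 M,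
        if i ∈ F'.1 then Ideal.Quotient.mk (chowAfIdeal M) (X F') else 0 := by
      unfold gmap; rw [dif_neg hF]
      exact congrArg Neg.neg (Finset.sum_congr rfl fun F' _ =>
        if_congr (by rw [hFi, Set.singleton_subset_iff]) rfl rfl)
    have eG : gmap M G = -∑ F' : FlatGE2 M,
        if j ∈ F'.1 then Ideal.Quotient.mk (chowAfIdeal M) (X F') else 0 := by
      unfold gmap; rw [dif_neg hG]
      exact congrArg Neg.neg (Finset.sum_congr rfl fun F' _ =>
        if_congr (by rw [hGj, Set.singleton_subset_iff]) rfl rfl)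
    rw [eF, eG]
    have h : (∑ A : FlatGE2 M, if i ∈ A.1 then Ideal.Quotient.mk (chowAfIdeal M) (X A) else 0) *
        (∑ B : FlatGE2 M, if j ∈ B.1 then Ideal.Quotient.mk (chowAfIdeal M) (X B) else 0) =
        Ideal.Quotient.mk (chowAfIdeal M)
          (∑ A : FlatGE2 M, ∑ B : FlatGE2 M, if i ∈ A.1 ∧ j ∈ B.1 then X A * X B else 0) := by
      rw [Finset.sum_mul_sum, map_sum]
      refine Finset.sum_congr rfl fun A _ => ?_
      rw [map_sum]
      refine Finset.sum_congr rfl fun B _ => ?_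
      by_cases hA : i ∈ A.1 <;> by_cases hB : j ∈ B.1 <;>
        simp [hA, hB]
    have h0 := h.trans (Ideal.Quotient.eq_zero_iff_mem.mpr (afC hiE hjE hij))
    linear_combination h0

/-- The atom-free-to-FY algebra map on polynomials. -/
noncomputable def psi0 (M : Matroid α) :
    MvPolynomial (FlatGE2 M) ℚ →ₐ[ℚ] MvPolynomial (FlatNE M) ℚ :=
  aeval (fun F : FlatGE2 M => (X (toNE M F) : MvPolynomial (FlatNE M) ℚ))

lemma psi0_X (F : FlatGE2 M) : psi0 M (X F) = X (toNE M F) := by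
  rw [psi0, aeval_X]

lemma reindex_b (hs : MSimple M) (F : FlatGE2 M) {i : α} (hiF : i ∉ F.1) :
    (∑ F' : FlatGE2 M, if F.1 ∪ {i} ⊆ F'.1
        then (X (toNE M F') : MvPolynomial (FlatNE M) ℚ) else 0) =
      ∑ B : FlatNE M, if F.1 ∪ {i} ⊆ B.1 then X B else 0 := by
  rw [sum_flatNE hs (fun B : FlatNE M =>
    if F.1 ∪ {i} ⊆ B.1 then (X B : MvPolynomial (FlatNE M) ℚ) else 0)]
  have hz : (∑ k : {x : α // x ∈ M.E}, if F.1 ∪ {i} ⊆ ({k.1} : Set α) then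
      (X (⟨{k.1}, singleton_flat hs k.2, Set.singleton_nonempty _⟩ : FlatNE M) :
        MvPolynomial (FlatNE M) ℚ) else 0) = 0 := by
    refine Finset.sum_eq_zero fun k _ => if_neg fun hsub => ?_
    obtain ⟨x, hx⟩ := nonempty_of_two_le_mrk F.2.2
    have hik : i = k.1 := hsub (Set.mem_union_right _ rfl)
    have hxk : x = k.1 := hsub (Set.mem_union_left _ hx)
    exact hiF ((hik.trans hxk.symm) ▸ hx)
  rw [hz, add_zero]
  exact Finset.sum_congr rfl fun F' _ => by rw [toNE_val]

lemma reindex_diag (hs : MSimple M) {i j : α} (hij : i ≠ j) :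
    (∑ F : FlatGE2 M, if i ∈ F.1 ∧ j ∈ F.1
        then ((X (toNE M F)) ^ 2 : MvPolynomial (FlatNE M) ℚ) else 0) =
      ∑ A : FlatNE M, if i ∈ A.1 ∧ j ∈ A.1 then X A ^ 2 else 0 := by
  rw [sum_flatNE hs (fun A : FlatNE M =>
    if i ∈ A.1 ∧ j ∈ A.1 then (X A ^ 2 : MvPolynomial (FlatNE M) ℚ) else 0)]
  have hz : (∑ k : {x : α // x ∈ M.E}, if i ∈ ({k.1} : Set α) ∧ j ∈ ({k.1} : Set α) then
      (X (⟨{k.1}, singleton_flat hs k.2, Set.singleton_nonempty _⟩ : FlatNE M) ^ 2 :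
        MvPolynomial (FlatNE M) ℚ) else 0) = 0 := by
    refine Finset.sum_eq_zero fun k _ => if_neg fun h => ?_
    exact hij ((Set.mem_singleton_iff.mp h.1).trans (Set.mem_singleton_iff.mp h.2).symm)
  erw [hz, add_zero]
  exact Finset.sum_congr rfl fun F _ => by rw [toNE_val]

lemma reindex_cross (hs : MSimple M) {i j : α} (hij : i ≠ j) :
    (∑ F : FlatGE2 M, ∑ F' : FlatGE2 M, if i ∈ F.1 ∧ j ∈ F.1 ∧ F.1 ⊂ F'.1
        then (2 * (X (toNE M F) * X (toNE M F')) : MvPolynomial (FlatNE M) ℚ) else 0) =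
      ∑ A : FlatNE M, ∑ B : FlatNE M,
        if i ∈ A.1 ∧ j ∈ A.1 ∧ A.1 ⊂ B.1 then 2 * (X A * X B) else 0 := by
  rw [sum_flatNE hs (fun A : FlatNE M => ∑ B : FlatNE M,
    if i ∈ A.1 ∧ j ∈ A.1 ∧ A.1 ⊂ B.1
      then (2 * (X A * X B) : MvPolynomial (FlatNE M) ℚ) else 0)]
  have hz : (∑ k : {x : α // x ∈ M.E}, ∑ B : FlatNE M,
      if i ∈ ({k.1} : Set α) ∧ j ∈ ({k.1} : Set α) ∧ ({k.1} : Set α) ⊂ B.1 then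
      (2 * ((X ⟨{k.1}, singleton_flat hs k.2, Set.singleton_nonempty _⟩ :
          MvPolynomial (FlatNE M) ℚ)
        * X B) : MvPolynomial (FlatNE M) ℚ) else 0) = 0 := by
    refine Finset.sum_eq_zero fun k _ => Finset.sum_eq_zero fun B _ => if_neg fun h => ?_
    exact hij ((Set.mem_singleton_iff.mp h.1).trans (Set.mem_singleton_iff.mp h.2.1).symm)
  erw [hz, add_zero]
  refine Finset.sum_congr rfl fun F _ => ?_
  rw [sum_flatNE hs (fun B : FlatNE M =>
    if i ∈ (toNE M F).1 ∧ j ∈ (toNE M F).1 ∧ (toNE M F).1 ⊂ B.1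
      then (2 * (X (toNE M F) * X B) : MvPolynomial (FlatNE M) ℚ) else 0)]
  have hz2 : (∑ k : {x : α // x ∈ M.E},
      if i ∈ (toNE M F).1 ∧ j ∈ (toNE M F).1 ∧ (toNE M F).1 ⊂ ({k.1} : Set α) then
      (2 * ((X (toNE M F) : MvPolynomial (FlatNE M) ℚ) *
        (X ⟨{k.1}, singleton_flat hs k.2, Set.singleton_nonempty _⟩ :
          MvPolynomial (FlatNE M) ℚ)) :
        MvPolynomial (FlatNE M) ℚ) else 0) = 0 := by
    refine Finset.sum_eq_zero fun k _ => if_neg fun h => ?_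
    have hik : i = k.1 := Set.mem_singleton_iff.mp (h.2.2.1 h.1)
    have hjk : j = k.1 := Set.mem_singleton_iff.mp (h.2.2.1 h.2.1)
    exact hij (hik.trans hjk.symm)
  rw [hz2, add_zero]
  exact Finset.sum_congr rfl fun F' _ => rfl

lemma psi0_ideal (hs : MSimple M) {p : MvPolynomial (FlatGE2 M) ℚ}
    (hp : p ∈ chowAfIdeal M) : psi0 M p ∈ chowIdeal M := by
  have hle : chowAfIdeal M ≤ (chowIdeal M).comap (psi0 M).toRingHom := by
    unfold chowAfIdeal
    refine Ideal.span_le.mpr ?_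
    intro q hq
    simp only [Set.mem_union, Set.mem_setOf_eq] at hq
    rcases hq with ((⟨F, G, hFG, hGF, rfl⟩ | ⟨F, i, hi, hiF, rfl⟩) | ⟨i, j, hi, hj, hij, rfl⟩)
    · show psi0 M _ ∈ chowIdeal M
      rw [map_mul, psi0_X, psi0_X]
      exact quad_mem hFG hGF
    · show psi0 M _ ∈ chowIdeal M
      rw [finsum_eq_sum_of_fintype, map_mul, map_sum, psi0_X]
      have h1 : ∀ F' : FlatGE2 M,
          psi0 M (if F.1 ∪ {i} ⊆ F'.1 then X F' else 0) =
          (if F.1 ∪ {i} ⊆ F'.1 then (X (toNE M F') : MvPolynomial (FlatNE M) ℚ) else 0) :=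
        fun F' => by rw [apply_ite (psi0 M), map_zero, psi0_X]
      rw [Finset.sum_congr rfl fun F' _ => h1 F', reindex_b hs F hiF]
      exact lemK (toNE M F) hi hiF
    · show psi0 M _ ∈ chowIdeal M
      rw [finsum_eq_sum_of_fintype, map_add, map_sum]
      have h1 : ∀ F : FlatGE2 M,
          psi0 M (if i ∈ F.1 ∧ j ∈ F.1 then X F ^ 2 else 0) =
          (if i ∈ F.1 ∧ j ∈ F.1
            then ((X (toNE M F)) ^ 2 : MvPolynomial (FlatNE M) ℚ) else 0) := fun F => by
        rw [apply_ite (psi0 M), map_zero, map_pow, psi0_X]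
      have h2 : psi0 M (∑ᶠ F : FlatGE2 M, ∑ᶠ F' : FlatGE2 M,
          if i ∈ F.1 ∧ j ∈ F.1 ∧ F.1 ⊂ F'.1 then 2 * (X F * X F') else 0) =
          ∑ F : FlatGE2 M, ∑ F' : FlatGE2 M, if i ∈ F.1 ∧ j ∈ F.1 ∧ F.1 ⊂ F'.1
            then (2 * (X (toNE M F) * X (toNE M F')) : MvPolynomial (FlatNE M) ℚ) else 0 := by
        rw [finsum_eq_sum_of_fintype, map_sum]
        refine Finset.sum_congr rfl fun F _ => ?_
        rw [finsum_eq_sum_of_fintype, map_sum]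
        refine Finset.sum_congr rfl fun F' _ => ?_
        rw [apply_ite (psi0 M), map_zero, map_mul, map_mul, psi0_X, psi0_X, map_ofNat]
      rw [Finset.sum_congr rfl fun F _ => h1 F, h2, reindex_diag hs hij,
        reindex_cross hs hij]
      exact bigP_mem hi hj
  exact hle hp

end Maps


section Final
variable {α : Type*} [Fintype α] {M : Matroid α}

lemma fA_ideal (hs : MSimple M) : ∀ a ∈ chowIdeal M, fA M a = 0 := by
  have hle : chowIdeal M ≤ RingHom.ker (fA M).toRingHom := by
    unfold chowIdeal
    refine sup_le (Ideal.span_le.mpr ?_) (Ideal.span_le.mpr ?_)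
    · rintro p ⟨i, hi, rfl⟩
      rw [SetLike.mem_coe, RingHom.mem_ker]
      show fA M _ = 0
      rw [finsum_eq_sum_of_fintype]
      exact fA_lin hs hi
    · rintro p ⟨F, G, h1, h2, rfl⟩
      rw [SetLike.mem_coe, RingHom.mem_ker]
      exact fA_quad hs h1 h2
  exact fun a ha => hle ha

/-- The induced map on quotients, FY to atom-free. -/
noncomputable def fbar (M : Matroid α) (hs : MSimple M) :
    (MvPolynomial (FlatNE M) ℚ ⧸ chowIdeal M) →ₐ[ℚ]
      (MvPolynomial (FlatGE2 M) ℚ ⧸ chowAfIdeal M) :=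
  Ideal.Quotient.liftₐ (chowIdeal M) (fA M) (fA_ideal hs)

/-- The induced map on quotients, atom-free to FY. -/
noncomputable def gbar (M : Matroid α) (hs : MSimple M) :
    (MvPolynomial (FlatGE2 M) ℚ ⧸ chowAfIdeal M) →ₐ[ℚ]
      (MvPolynomial (FlatNE M) ℚ ⧸ chowIdeal M) :=
  Ideal.Quotient.liftₐ (chowAfIdeal M)
    ((Ideal.Quotient.mkₐ ℚ (chowIdeal M)).comp (psi0 M))
    (fun a ha => by
      show Ideal.Quotient.mkₐ ℚ (chowIdeal M) (psi0 M a) = 0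
      rw [Ideal.Quotient.mkₐ_eq_mk, Ideal.Quotient.eq_zero_iff_mem]
      exact psi0_ideal hs ha)

lemma fbar_mk (hs : MSimple M) (x : MvPolynomial (FlatNE M) ℚ) :
    fbar M hs (Ideal.Quotient.mk (chowIdeal M) x) = fA M x := by
  rw [fbar, Ideal.Quotient.liftₐ_apply]
  rfl

lemma gbar_mk (hs : MSimple M) (x : MvPolynomial (FlatGE2 M) ℚ) :
    gbar M hs (Ideal.Quotient.mk (chowAfIdeal M) x) =
      Ideal.Quotient.mk (chowIdeal M) (psi0 M x) := by
  rw [gbar, Ideal.Quotient.liftₐ_apply]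
  rfl

lemma comp_fg (hs : MSimple M) :
    (fbar M hs).comp (gbar M hs) =
      AlgHom.id ℚ (MvPolynomial (FlatGE2 M) ℚ ⧸ chowAfIdeal M) := by
  refine Ideal.Quotient.algHom_ext ℚ (MvPolynomial.algHom_ext fun F => ?_)
  simp only [AlgHom.comp_apply, Ideal.Quotient.mkₐ_eq_mk, AlgHom.coe_id, id_eq]
  rw [gbar_mk, psi0_X, fbar_mk]
  have hX : fA M (X (toNE M F)) = gmap M (toNE M F) := by rw [fA, aeval_X]
  rw [hX, gmap_toNE]

lemma comp_gf (hs : MSimple M) :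
    (gbar M hs).comp (fbar M hs) =
      AlgHom.id ℚ (MvPolynomial (FlatNE M) ℚ ⧸ chowIdeal M) := by
  refine Ideal.Quotient.algHom_ext ℚ (MvPolynomial.algHom_ext fun F => ?_)
  simp only [AlgHom.comp_apply, Ideal.Quotient.mkₐ_eq_mk, AlgHom.coe_id, id_eq]
  rw [fbar_mk]
  have hX : fA M (X F) = gmap M F := by rw [fA, aeval_X]
  rw [hX]
  by_cases h : 2 ≤ mrk M F.1
  · have e1 : gmap M F = Ideal.Quotient.mk (chowAfIdeal M) (X ⟨F.1, F.2.1, h⟩) := by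
      unfold gmap; rw [dif_pos h]
    rw [e1, gbar_mk, psi0_X]
    exact congrArg _ (congrArg X (Subtype.ext rfl))
  · obtain ⟨k, hkE, hFk⟩ := flat_eq_singleton hs F.2.1 F.2.2 h
    have e1 : gmap M F = -∑ F' : FlatGE2 M,
        if F.1 ⊆ F'.1 then Ideal.Quotient.mk (chowAfIdeal M) (X F') else 0 := by
      unfold gmap; rw [dif_neg h]
    rw [e1, map_neg, map_sum]
    have e2 : ∀ F' : FlatGE2 M,
        gbar M hs (if F.1 ⊆ F'.1 then Ideal.Quotient.mk (chowAfIdeal M) (X F') else 0) =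
        (if F.1 ⊆ F'.1 then
          Ideal.Quotient.mk (chowIdeal M) (X (toNE M F')) else 0) := fun F' => by
      rw [apply_ite (gbar M hs), map_zero, gbar_mk, psi0_X]
    rw [Finset.sum_congr rfl fun F' _ => e2 F']
    have key : (X F : MvPolynomial (FlatNE M) ℚ) +
        ∑ F' : FlatGE2 M, (if F.1 ⊆ F'.1 then (X (toNE M F') :
          MvPolynomial (FlatNE M) ℚ) else 0) = LA M k := by
      rw [LA, sum_flatNE hs (fun B : FlatNE M =>
        if k ∈ B.1 then (X B : MvPolynomial (FlatNE M) ℚ) else 0)]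
      have hatom : (∑ a : {x : α // x ∈ M.E}, if k ∈ ({a.1} : Set α) then
          (X (⟨{a.1}, singleton_flat hs a.2, Set.singleton_nonempty _⟩ : FlatNE M) :
            MvPolynomial (FlatNE M) ℚ) else 0) = X F := by
        rw [Finset.sum_eq_single_of_mem ⟨k, hkE⟩ (Finset.mem_univ _)
          (fun a _ ha => if_neg
            (fun hmem => ha (Subtype.ext (Set.mem_singleton_iff.mp hmem).symm)))]
        rw [if_pos (Set.mem_singleton k)]
        exact congrArg X (Subtype.ext hFk.symm)
      erw [hatom]
      have hcond : (∑ F' : FlatGE2 M, if F.1 ⊆ F'.1 then (X (toNE M F') :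
          MvPolynomial (FlatNE M) ℚ) else 0) =
          ∑ F' : FlatGE2 M, if k ∈ F'.1 then (X (toNE M F') :
            MvPolynomial (FlatNE M) ℚ) else 0 :=
        Finset.sum_congr rfl fun F' _ => if_congr
          (by rw [hFk, Set.singleton_subset_iff]) rfl rfl
      rw [hcond, add_comm]
      congr 1
    have hmem : (X F : MvPolynomial (FlatNE M) ℚ) +
        ∑ F' : FlatGE2 M, (if F.1 ⊆ F'.1 then (X (toNE M F') :
          MvPolynomial (FlatNE M) ℚ) else 0) ∈ chowIdeal M := key ▸ lin_mem hkE
    have h0 := Ideal.Quotient.eq_zero_iff_mem.mpr hmem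
    rw [map_add, map_sum] at h0
    have e3 : ∀ F' : FlatGE2 M,
        Ideal.Quotient.mk (chowIdeal M) (if F.1 ⊆ F'.1 then (X (toNE M F') :
          MvPolynomial (FlatNE M) ℚ) else 0) =
        (if F.1 ⊆ F'.1 then Ideal.Quotient.mk (chowIdeal M) (X (toNE M F')) else 0) :=
      fun F' => by rw [apply_ite (Ideal.Quotient.mk (chowIdeal M)), map_zero]
    rw [Finset.sum_congr rfl fun F' _ => e3 F'] at h0
    linear_combination -h0

end Final


/-- For a simple matroid `M`, the Feichtner–Yuzvinsky
presentation and the atom-free presentation give isomorphic rings,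
`Chow_FY(M) ≅ Chow_af(M)`, via the change of variables
`x_i ↦ x_i − ∑_{F ⊋ i} x_F` for atoms `i` followed by eliminating the atom
variables: the isomorphism fixes the classes of the variables `x_F` for flats
`F` of rank at least 2 and sends the class of an atom variable `x_i` to
`−∑_{F ⊋ {i}} x_F`. -/
theorem chowFY_iso_chowAf {α : Type*} [Fintype α] (M : Matroid α) (hs : MSimple M) :
    ∃ e : (MvPolynomial (FlatNE M) ℚ ⧸ chowIdeal M) ≃ₐ[ℚ]
        (MvPolynomial (FlatGE2 M) ℚ ⧸ chowAfIdeal M),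
      (∀ (F : Set α) (h1 : M.IsFlat F ∧ F.Nonempty) (h2 : M.IsFlat F ∧ 2 ≤ mrk M F),
        e (Ideal.Quotient.mk (chowIdeal M) (X ⟨F, h1⟩)) =
          Ideal.Quotient.mk (chowAfIdeal M) (X ⟨F, h2⟩)) ∧
      (∀ i : α, i ∈ M.E → ∀ h1 : M.IsFlat {i} ∧ ({i} : Set α).Nonempty,
        e (Ideal.Quotient.mk (chowIdeal M) (X ⟨{i}, h1⟩)) =
          -∑ᶠ F : FlatGE2 M,
            if i ∈ F.1 then Ideal.Quotient.mk (chowAfIdeal M) (X F) else 0) := by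
  refine ⟨AlgEquiv.ofAlgHom (fbar M hs) (gbar M hs) (comp_fg hs) (comp_gf hs), ?_, ?_⟩
  · intro F h1 h2
    show fbar M hs (Ideal.Quotient.mk (chowIdeal M) (X ⟨F, h1⟩)) = _
    rw [fbar_mk]
    have hX : fA M (X (⟨F, h1⟩ : FlatNE M)) = gmap M ⟨F, h1⟩ := by rw [fA, aeval_X]
    rw [hX]
    unfold gmap
    rw [dif_pos h2.2]
  · intro i hi h1
    show fbar M hs (Ideal.Quotient.mk (chowIdeal M) (X ⟨{i}, h1⟩)) = _
    rw [fbar_mk]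
    have hX : fA M (X (⟨{i}, h1⟩ : FlatNE M)) = gmap M ⟨{i}, h1⟩ := by rw [fA, aeval_X]
    rw [hX, gmap_singleton h1]
    rw [finsum_eq_sum_of_fintype]
end

section
/- Let M be a simple matroid on ground set E and e an element not in E. A subset of E ∪ {e} of the form F ∪ {e} is a flat of the free coextension (M* + e)* if and only if F is a flat of M; and a subset F ⊆ E is a flat of (M* + e)* if and only if F is an independent set of M. -/
open MvPolynomial
open scoped Classical

open Set
section aux
variable {α : Type*} [Fintype α] {M : Matroid α} {I X : Set α} {x : α}

lemma mrk_bddAbove (M : Matroid α) (X : Set α) :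
    BddAbove {n | ∃ I, M.Indep I ∧ I ⊆ X ∧ I.ncard = n} := by
  refine ⟨Fintype.card α, ?_⟩
  rintro n ⟨I, -, -, rfl⟩
  simpa [Set.ncard_univ] using Set.ncard_le_ncard (subset_univ I) finite_univ

lemma le_mrk (hI : M.Indep I) (hIX : I ⊆ X) : I.ncard ≤ mrk M X :=
  le_csSup (mrk_bddAbove M X) ⟨I, hI, hIX, rfl⟩

lemma mrk_eq_of_basis' (hI : M.IsBasis' I X) : mrk M X = I.ncard := by
  refine le_antisymm (csSup_le ⟨0, ∅, M.empty_indep, empty_subset X, by simp⟩ ?_)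
    (le_mrk hI.indep hI.subset)
  rintro n ⟨J, hJ, hJX, rfl⟩
  by_contra hlt
  push_neg at hlt
  have hlt' : I.encard < J.encard := by
    rw [← I.toFinite.cast_ncard_eq, ← J.toFinite.cast_ncard_eq]
    exact_mod_cast hlt
  obtain ⟨y, hy, hyI⟩ := hI.indep.augment hJ hlt'
  exact hI.insert_not_indep ⟨hJX hy.1, hy.2⟩ hyI

lemma mrk_indep (hI : M.Indep I) : mrk M I = I.ncard :=
  mrk_eq_of_basis' hI.isBasis_self.isBasis'

lemma indep_of_mrk_eq (hX : X ⊆ M.E) (h : mrk M X = X.ncard) : M.Indep X := by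
  obtain ⟨I, hI⟩ := M.exists_isBasis' X
  rw [mrk_eq_of_basis' hI] at h
  have hIX := Set.eq_of_subset_of_ncard_le hI.subset (le_of_eq h.symm) X.toFinite
  rw [← hIX]; exact hI.indep

lemma mem_closure_iff_mrk (hX : X ⊆ M.E) (hx : x ∈ M.E) :
    x ∈ M.closure X ↔ mrk M (insert x X) = mrk M X := by
  obtain ⟨I, hI⟩ := M.exists_isBasis X hX
  have hrX : mrk M X = I.ncard := mrk_eq_of_basis' hI.isBasis'
  by_cases hxc : x ∈ M.closure X
  · simp only [hxc, true_iff]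
    have hb : M.IsBasis I (insert x X) :=
      hI.indep.isBasis_of_subset_of_subset_closure (hI.subset.trans (subset_insert _ _))
        (insert_subset (by rwa [hI.closure_eq_closure]) hI.subset_closure)
    rw [mrk_eq_of_basis' hb.isBasis', hrX]
  · simp only [hxc, false_iff]
    have hxX : x ∉ X := fun h => hxc (M.subset_closure X hX h)
    have hxI : x ∉ I := fun h => hxX (hI.subset h)
    have hxcI : x ∉ M.closure I := by rwa [hI.closure_eq_closure]
    have hins : M.Indep (insert x I) :=
      (hI.indep.notMem_closure_iff_of_notMem hxI hx).mp hxcI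
    have hb : M.IsBasis (insert x I) (insert x X) :=
      hins.isBasis_of_subset_of_subset_closure (insert_subset_insert hI.subset)
        (insert_subset (M.subset_closure _ hins.subset_ground (mem_insert _ _))
          (hI.subset_closure.trans (M.closure_subset_closure (subset_insert _ _))))
    rw [mrk_eq_of_basis' hb.isBasis', hrX, Set.ncard_insert_of_notMem hxI I.toFinite]
    omega

lemma flat_iff_mrk {F : Set α} (hF : F ⊆ M.E) :
    M.IsFlat F ↔ ∀ x ∈ M.E, mrk M (insert x F) = mrk M F → x ∈ F := by
  constructor
  · intro h x hx hr
    have := (mem_closure_iff_mrk hF hx).mpr hr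
    rwa [h.closure] at this
  · intro h
    refine ⟨fun I Y hIF hIY y hy => ?_, hF⟩
    have hyE : y ∈ M.E := hIY.subset_ground hy
    apply h y hyE
    rw [← mem_closure_iff_mrk hF hyE]
    have hy2 : y ∈ M.closure I := hIY.subset_closure hy
    rwa [hIF.closure_eq_closure] at hy2

end aux

/-- Let `M` be a simple matroid on ground set `E` and `e ∉ E`.
Let `N = (M* + e)*` be the free coextension of `M`, the matroid on `E ∪ {e}`
whose rank function satisfies `rk_N (F ∪ {e}) = rk_M F + 1` for `F ⊆ E`,
`rk_N F = rk_M F + 1` if `F ⊆ E` is dependent in `M`, and `rk_N F = |F|` if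
`F ⊆ E` is independent in `M`.  Then a set of the form `F ∪ {e}` is a flat of
`N` if and only if `F` is a flat of `M`, and a set `F ⊆ E` is a flat of `N` if
and only if `F` is an independent set of `M`. -/
theorem freeCoextension_flats {α : Type*} [Fintype α] (M N : Matroid α)
    (hs : MSimple M) (e : α) (he : e ∉ M.E) (hNE : N.E = insert e M.E)
    (h1 : ∀ F ⊆ M.E, mrk N (insert e F) = mrk M F + 1)
    (h2 : ∀ F ⊆ M.E, ¬M.Indep F → mrk N F = mrk M F + 1)
    (h3 : ∀ F ⊆ M.E, M.Indep F → mrk N F = F.ncard) :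
    (∀ F ⊆ M.E, (N.IsFlat (insert e F) ↔ M.IsFlat F)) ∧
      (∀ F ⊆ M.E, (N.IsFlat F ↔ M.Indep F)) := by
  have heN : e ∈ N.E := by rw [hNE]; exact mem_insert _ _
  have hME : M.E ⊆ N.E := by rw [hNE]; exact subset_insert _ _
  constructor
  · intro F hF
    have hFN : insert e F ⊆ N.E := by rw [hNE]; exact insert_subset_insert hF
    rw [flat_iff_mrk hFN, flat_iff_mrk hF]
    constructor
    · intro h x hx hr
      have hxF : insert x F ⊆ M.E := insert_subset hx hF
      have : mrk N (insert x (insert e F)) = mrk N (insert e F) := by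
        rw [Set.insert_comm, h1 _ hxF, h1 _ hF, hr]
      have hxm := h x (hME hx) this
      rcases hxm with h' | h'
      · exact absurd hx (h' ▸ he)
      · exact h'
    · intro h x hx hr
      rw [hNE] at hx
      rcases hx with rfl | hx
      · exact mem_insert _ _
      · have hxF : insert x F ⊆ M.E := insert_subset hx hF
        rw [Set.insert_comm, h1 _ hxF, h1 _ hF] at hr
        exact mem_insert_of_mem _ (h x hx (by omega))
  · intro F hF
    have hFN : F ⊆ N.E := hF.trans hME
    constructor
    · intro hflat
      by_contra hdep
      have : mrk N (insert e F) = mrk N F := by rw [h1 _ hF, h2 _ hF hdep]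
      have heF := (flat_iff_mrk hFN).mp hflat e heN this
      exact he (hF heF)
    · intro hind
      rw [flat_iff_mrk hFN]
      intro x hx hr
      by_contra hxF
      rw [h3 _ hF hind] at hr
      rw [hNE] at hx
      rcases hx with rfl | hx
      · rw [h1 _ hF, mrk_indep hind] at hr
        omega
      · have hxFE : insert x F ⊆ M.E := insert_subset hx hF
        by_cases hind' : M.Indep (insert x F)
        · rw [h3 _ hxFE hind', Set.ncard_insert_of_notMem hxF F.toFinite] at hr
          omega
        · rw [h2 _ hxFE hind'] at hr
          have : F.ncard ≤ mrk M (insert x F) := le_mrk hind (subset_insert _ _)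
          omega
end

section
/- Let M be a simple matroid on ground set E, e ∉ E, and let L̂ be the lattice of flats of the free coextension (M*+e)*. Then the set 𝒢_aug = {{i} : i ∈ E} ∪ {F ∪ {e} : F a flat of M} is a building set for L̂. -/
open MvPolynomial
open scoped Classical

open scoped Classical in
/-- `𝒢` is a building set for the bounded-below poset `P` (in the sense of
Feichtner–Yuzvinsky): `⊥ ∉ 𝒢`, and for every `G ≠ ⊥`, writing `S` for the set
of maximal elements of `𝒢` lying below `G`, there is an order isomorphism
`∏_{H ∈ S} [⊥, H] ≃ [⊥, G]` sending, for each `H ∈ S`, the tuple which is `H`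
in coordinate `H` and `⊥` elsewhere to `H`. -/
def IsBuildingSet (P : Type*) [PartialOrder P] [OrderBot P] (𝒢 : Set P) : Prop :=
  (⊥ : P) ∉ 𝒢 ∧ ∀ G : P, G ≠ ⊥ →
    ∃ φ : ((H : {H : P // H ∈ 𝒢 ∧ H ≤ G ∧ ∀ H' ∈ 𝒢, H' ≤ G → H ≤ H' → H = H'}) →
        Set.Icc (⊥ : P) H.1) ≃o Set.Icc (⊥ : P) G,
      ∀ H : {H : P // H ∈ 𝒢 ∧ H ≤ G ∧ ∀ H' ∈ 𝒢, H' ≤ G → H ≤ H' → H = H'},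
        φ (fun H' => if H' = H then ⟨H'.1, ⟨bot_le, le_rfl⟩⟩ else ⟨⊥, ⟨le_rfl, bot_le⟩⟩) =
          ⟨H.1, ⟨bot_le, H.2.2.1⟩⟩

/-- The lattice of flats of the free coextension `(M* + e)*` of a matroid `M`:
its elements are the sets `F ∪ {e}` for `F` a flat of `M` together with the
independent sets of `M`, ordered by inclusion. -/
def CoextFlat {α : Type*} (M : Matroid α) (e : α) : Type _ :=
  {X : Set α // (∃ F, M.IsFlat F ∧ X = insert e F) ∨ M.Indep X}

noncomputable instance {α : Type*} (M : Matroid α) (e : α) :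
    PartialOrder (CoextFlat M e) :=
  Subtype.partialOrder _

noncomputable instance {α : Type*} (M : Matroid α) (e : α) :
    OrderBot (CoextFlat M e) where
  bot := ⟨∅, Or.inr M.empty_indep⟩
  bot_le x := Set.empty_subset x.1

/-- Auxiliary: if `G` itself belongs to `𝒢`, then `G` is the unique maximal element of
`𝒢` below `G`, and the product of intervals degenerates to `[⊥, G]`. -/
theorem selfMaxIso {P : Type*} [PartialOrder P] [OrderBot P] (𝒢 : Set P) (G : P)
    (hG𝒢 : G ∈ 𝒢) :
    ∃ φ : ((H : {H : P // H ∈ 𝒢 ∧ H ≤ G ∧ ∀ H' ∈ 𝒢, H' ≤ G → H ≤ H' → H = H'}) →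
        Set.Icc (⊥ : P) H.1) ≃o Set.Icc (⊥ : P) G,
      ∀ H : {H : P // H ∈ 𝒢 ∧ H ≤ G ∧ ∀ H' ∈ 𝒢, H' ≤ G → H ≤ H' → H = H'},
        φ (fun H' => if H' = H then ⟨H'.1, ⟨bot_le, le_rfl⟩⟩ else ⟨⊥, ⟨le_rfl, bot_le⟩⟩) =
          ⟨H.1, ⟨bot_le, H.2.2.1⟩⟩ := by
  classical
  let HG : {H : P // H ∈ 𝒢 ∧ H ≤ G ∧ ∀ H' ∈ 𝒢, H' ≤ G → H ≤ H' → H = H'} :=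
    ⟨G, hG𝒢, le_rfl, fun H' _ h1 h2 => le_antisymm h2 h1⟩
  have hall : ∀ H : {H : P // H ∈ 𝒢 ∧ H ≤ G ∧ ∀ H' ∈ 𝒢, H' ≤ G → H ≤ H' → H = H'},
      H = HG := fun H => Subtype.ext (H.2.2.2 G hG𝒢 le_rfl H.2.2.1)
  refine ⟨⟨⟨fun f => f HG,
    fun x H => ⟨x.1, bot_le, by rw [hall H]; exact x.2.2⟩,
    fun f => funext fun H => by cases hall H; exact Subtype.ext rfl,
    fun x => Subtype.ext rfl⟩,
    fun {f g} => ⟨fun h H => by cases hall H; exact h, fun h => h HG⟩⟩, ?_⟩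
  intro H
  cases hall H
  show (if HG = HG then _ else _) = _
  rw [if_pos rfl]

/-- Let `M` be a simple matroid on ground set `E` and
`e ∉ E`.  Then `𝒢_aug = {{i} : i ∈ E} ∪ {F ∪ {e} : F a flat of M}` is a
building set for the lattice of flats of the free coextension `(M* + e)*`. -/

theorem augmented_building_set {α : Type*} [Fintype α] (M : Matroid α)
    (hs : MSimple M) (e : α) (he : e ∉ M.E) :
    IsBuildingSet (CoextFlat M e)
      {x : CoextFlat M e |
        (∃ i ∈ M.E, x.1 = {i}) ∨ ∃ F, M.IsFlat F ∧ x.1 = insert e F} := by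
  classical
  constructor
  · rintro (⟨i, hi, hval⟩ | ⟨F, hF, hval⟩)
    · exact Set.singleton_ne_empty i hval.symm
    · exact (Set.insert_nonempty e F).ne_empty hval.symm
  · intro G hG
    obtain ⟨F, hF, hGF⟩ | hI := G.2
    · -- Case A : `e ∈ G`, the unique maximal element below `G` is `G` itself.
      exact selfMaxIso _ G (Or.inr ⟨F, hF, hGF⟩)
    · -- Case B : `G` is independent; the maximal elements are the singletons.
      have hIE : G.1 ⊆ M.E := hI.subset_ground
      have memS : ∀ i (hi : i ∈ G.1),
          (⟨{i}, Or.inr (hI.subset (Set.singleton_subset_iff.2 hi))⟩ : CoextFlat M e) ∈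
            {x : CoextFlat M e |
              (∃ i ∈ M.E, x.1 = {i}) ∨ ∃ F, M.IsFlat F ∧ x.1 = insert e F} ∧
          (⟨{i}, Or.inr (hI.subset (Set.singleton_subset_iff.2 hi))⟩ : CoextFlat M e) ≤ G ∧
          ∀ H' ∈ {x : CoextFlat M e |
              (∃ i ∈ M.E, x.1 = {i}) ∨ ∃ F, M.IsFlat F ∧ x.1 = insert e F},
            H' ≤ G →
            (⟨{i}, Or.inr (hI.subset (Set.singleton_subset_iff.2 hi))⟩ : CoextFlat M e) ≤ H' →
            (⟨{i}, Or.inr (hI.subset (Set.singleton_subset_iff.2 hi))⟩ : CoextFlat M e) = H' := by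
        intro i hi
        refine ⟨Or.inl ⟨i, hIE hi, rfl⟩, Set.singleton_subset_iff.2 hi, ?_⟩
        intro H' hH' hle hge
        rcases hH' with ⟨j, hj, hjval⟩ | ⟨F, hF, hFval⟩
        · refine Subtype.ext ?_
          show ({i} : Set α) = H'.1
          have hij : i ∈ ({j} : Set α) := by
            have := hge (Set.mem_singleton i)
            rwa [hjval] at this
          rw [hjval, Set.mem_singleton_iff.mp hij]
        · exfalso
          have h1 : e ∈ H'.1 := by rw [hFval]; exact Set.mem_insert e F
          exact he (hIE (hle h1))
      have hclass : ∀ H : {H : CoextFlat M e // H ∈ {x : CoextFlat M e |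
            (∃ i ∈ M.E, x.1 = {i}) ∨ ∃ F, M.IsFlat F ∧ x.1 = insert e F} ∧ H ≤ G ∧
            ∀ H' ∈ {x : CoextFlat M e |
              (∃ i ∈ M.E, x.1 = {i}) ∨ ∃ F, M.IsFlat F ∧ x.1 = insert e F},
              H' ≤ G → H ≤ H' → H = H'},
          ∃ i ∈ G.1, H.1.1 = {i} := by
        intro H
        obtain ⟨h𝒢, hle, hmax⟩ := H.2
        rcases h𝒢 with ⟨i, hi, hival⟩ | ⟨F, hF, hFval⟩
        · have h1 : i ∈ H.1.1 := by rw [hival]; rfl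
          exact ⟨i, hle h1, hival⟩
        · exfalso
          have h1 : e ∈ H.1.1 := by rw [hFval]; exact Set.mem_insert e F
          exact he (hIE (hle h1))
      have key : ∀ (u : {H : CoextFlat M e // H ∈ {x : CoextFlat M e |
            (∃ i ∈ M.E, x.1 = {i}) ∨ ∃ F, M.IsFlat F ∧ x.1 = insert e F} ∧ H ≤ G ∧
            ∀ H' ∈ {x : CoextFlat M e |
              (∃ i ∈ M.E, x.1 = {i}) ∨ ∃ F, M.IsFlat F ∧ x.1 = insert e F},
              H' ≤ G → H ≤ H' → H = H'} → Set α),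
          (∀ H, u H ⊆ H.1.1) → ∀ H, (⋃ H', u H') ∩ H.1.1 = u H := by
        intro u hu H
        obtain ⟨i, hi, hHi⟩ := hclass H
        ext a
        simp only [Set.mem_inter_iff, Set.mem_iUnion]
        constructor
        · rintro ⟨⟨H', ha'⟩, haH⟩
          obtain ⟨j, hj, hH'j⟩ := hclass H'
          have haj : a = j := by
            have := hu H' ha'
            rw [hH'j] at this
            exact this
          have hai : a = i := by
            rw [hHi] at haH
            exact haH
          have : H' = H := by
            refine Subtype.ext (Subtype.ext ?_)
            rw [hH'j, hHi, ← haj, ← hai]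
          rwa [this] at ha'
        · intro ha
          exact ⟨⟨H, ha⟩, hu H ha⟩
      refine ⟨⟨⟨fun f => ⟨⟨⋃ H, ((f H).1).1,
            by exact Or.inr (hI.subset (Set.iUnion_subset fun H =>
              Set.Subset.trans ((f H).2.2 : ((f H).1).1 ⊆ H.1.1) H.2.2.1))⟩,
            bot_le,
            by exact (Set.iUnion_subset fun H =>
              Set.Subset.trans ((f H).2.2 : ((f H).1).1 ⊆ H.1.1) H.2.2.1 :
              (⋃ H, ((f H).1).1) ⊆ G.1)⟩,
        fun x H => ⟨⟨x.1.1 ∩ H.1.1,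
            by exact Or.inr (hI.subset (Set.Subset.trans Set.inter_subset_left
              (x.2.2 : x.1.1 ⊆ G.1)))⟩,
            bot_le, by exact (Set.inter_subset_right : x.1.1 ∩ H.1.1 ⊆ H.1.1)⟩,
        fun f => funext fun H => Subtype.ext (Subtype.ext
          (key (fun H' => ((f H').1).1) (fun H' => ((f H').2.2 : _)) H)),
        fun x => Subtype.ext (Subtype.ext (by
          apply Set.Subset.antisymm
          · exact Set.iUnion_subset fun H => Set.inter_subset_left
          · intro a ha
            have haG : a ∈ G.1 := (x.2.2 : x.1.1 ⊆ G.1) ha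
            refine Set.mem_iUnion.2 ⟨⟨_, memS a haG⟩, ha, rfl⟩))⟩,
        fun {f g} => ?_⟩, ?_⟩
      · constructor
        · intro h H
          show ((f H).1 : CoextFlat M e) ≤ (g H).1
          show ((f H).1).1 ⊆ ((g H).1).1
          rw [← key (fun H' => ((f H').1).1) (fun H' => ((f H').2.2 : _)) H,
            ← key (fun H' => ((g H').1).1) (fun H' => ((g H').2.2 : _)) H]
          exact Set.inter_subset_inter_left _ h
        · intro h
          show (⋃ H, ((f H).1).1) ⊆ ⋃ H, ((g H).1).1
          exact Set.iUnion_mono fun H => h H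
      · intro H
        refine Subtype.ext (Subtype.ext ?_)
        ext a
        constructor
        · intro hu
          obtain ⟨H', ha⟩ := Set.mem_iUnion.mp hu
          by_cases hH : H' = H
          · simp only [if_pos hH] at ha
            exact hH ▸ ha
          · simp only [if_neg hH] at ha
            exact absurd ha (Set.notMem_empty a)
        · intro ha
          exact Set.mem_iUnion.mpr ⟨H, by simp only [if_pos rfl]; exact ha⟩
end
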